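/- arXiv:1907.04472 — 6 statements merged into one kernel-verified Lean document; each statement's English description precedes it below -/
import Mathlib

section
/- Under the SMG setting with assumptions (a), (b), (c) and the subproblem Lipschitz assumption, suppose additionally that each f_i is c_i-strongly convex with c = min_{1≤i≤m} c_i > 0, that x_* ∈ X satisfies ⟨∇_x S(x_*, λ_k), x_k − x_*⟩ ≥ 0 almost surely for every k, that λ_* ∈ Δ^m satisfies ∇_x S(x_*, λ_*) = 0, and that the stepsizes are α_k = γ/k with 1/(2c) < γ ≤ 1/c. Then for every k ≥ 1 the iterates generated by the stochastic multi-gradient algorithm satisfy E[S(x_k, λ_*)] − S(x_*, λ_*) ≤ (L/2) · max{2γ² M̄ (2cγ − 1)^{−1}, ‖x_0 − x_*‖²} / k, where M̄ = L_g² + 2Θ(L_{∇S} + β L_{∇S} M_S). -/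
set_option maxHeartbeats 4000000

open MeasureTheory
open scoped RealInnerProductSpace BigOperators



section Helpers

variable {E : Type*} [NormedAddCommGroup E] [InnerProductSpace ℝ E]

/-- variational inequality / nonexpansiveness at a projection point -/
lemma proj_dist_le {X : Set E} (hX : Convex ℝ X) {z p y : E} (hp : p ∈ X) (hy : y ∈ X)
    (hmin : ∀ w ∈ X, ‖z - p‖ ≤ ‖z - w‖) : ‖p - y‖ ≤ ‖z - y‖ := by
  have key : ⟪z - p, y - p⟫ ≤ 0 := by
    by_contra hcon
    push_neg at hcon
    set I := ⟪z - p, y - p⟫ with hI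
    have hyp : y ≠ p := by
      intro h
      simp only [hI, h, sub_self, inner_zero_right] at hcon
      exact lt_irrefl 0 hcon
    have hN : 0 < ‖y - p‖ ^ 2 :=
      pow_pos (norm_pos_iff.2 (sub_ne_zero.2 hyp)) 2
    set t : ℝ := min 1 (I / ‖y - p‖ ^ 2) with ht
    have ht0 : 0 < t := lt_min one_pos (div_pos hcon hN)
    have ht1 : t ≤ 1 := min_le_left _ _
    have hmem : p + t • (y - p) ∈ X := by
      have := hX hp hy (a := 1 - t) (b := t) (by linarith) ht0.le (by ring)
      convert this using 1
      module
    have h1 : ‖z - p‖ ^ 2 ≤ ‖z - (p + t • (y - p))‖ ^ 2 := by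
      have := hmin _ hmem
      have h2 := norm_nonneg (z - p)
      nlinarith
    have h2 : ‖z - (p + t • (y - p))‖ ^ 2
        = ‖z - p‖ ^ 2 - 2 * t * I + t ^ 2 * ‖y - p‖ ^ 2 := by
      have : z - (p + t • (y - p)) = (z - p) - t • (y - p) := by abel
      rw [this, norm_sub_sq_real, real_inner_smul_right, norm_smul]
      simp [mul_pow, abs_of_nonneg ht0.le]
      ring
    have h3 : 2 * I ≤ t * ‖y - p‖ ^ 2 := by nlinarith
    have h4 : t * ‖y - p‖ ^ 2 ≤ I := by
      rw [ht]
      calc min 1 (I / ‖y - p‖ ^ 2) * ‖y - p‖ ^ 2 ≤ (I / ‖y - p‖ ^ 2) * ‖y - p‖ ^ 2 :=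
            mul_le_mul_of_nonneg_right (min_le_right _ _) hN.le
        _ = I := div_mul_cancel₀ _ hN.ne'
    linarith
  have expand : ‖z - y‖ ^ 2 = ‖z - p‖ ^ 2 - 2 * ⟪z - p, y - p⟫ + ‖y - p‖ ^ 2 := by
    have : z - y = (z - p) - (y - p) := by abel
    rw [this, norm_sub_sq_real]
  have h5 : ‖p - y‖ ^ 2 ≤ ‖z - y‖ ^ 2 := by
    have : ‖p - y‖ = ‖y - p‖ := norm_sub_rev _ _
    rw [this]
    nlinarith [norm_nonneg (z - p)]
  nlinarith [norm_nonneg (p - y), norm_nonneg (z - y)]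

/-- descent lemma: Lipschitz gradient gives a quadratic upper bound -/
lemma descent_lemma [CompleteSpace E] {f : E → ℝ} {gf : E → E}
    (hgrad : ∀ z, HasGradientAt f (gf z) z)
    {L : ℝ} (hLip : ∀ a b, ‖gf a - gf b‖ ≤ L * ‖a - b‖) (x y : E) :
    f y ≤ f x + ⟪gf x, y - x⟫ + L / 2 * ‖y - x‖ ^ 2 := by
  set ψ : ℝ → ℝ := fun t =>
    f (x + t • (y - x)) - t * ⟪gf x, y - x⟫ - L * t ^ 2 / 2 * ‖y - x‖ ^ 2 with hψ
  have hc : ∀ t : ℝ, HasDerivAt (fun s : ℝ => x + s • (y - x)) (y - x) t := by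
    intro t
    simpa using ((hasDerivAt_id t).smul_const (y - x)).const_add x
  have hd : ∀ t : ℝ, HasDerivAt ψ
      (⟪gf (x + t • (y - x)), y - x⟫ - ⟪gf x, y - x⟫ - L * t * ‖y - x‖ ^ 2) t := by
    intro t
    have h1 : HasDerivAt (fun s : ℝ => f (x + s • (y - x)))
        ⟪gf (x + t • (y - x)), y - x⟫ t := by
      have := (hgrad (x + t • (y - x))).hasFDerivAt.comp_hasDerivAt t (hc t)
      simp at this
      exact this
    have h2 : HasDerivAt (fun s : ℝ => s * ⟪gf x, y - x⟫) ⟪gf x, y - x⟫ t := by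
      simpa using (hasDerivAt_id t).mul_const ⟪gf x, y - x⟫
    have h3 : HasDerivAt (fun s : ℝ => L * s ^ 2 / 2 * ‖y - x‖ ^ 2)
        (L * t * ‖y - x‖ ^ 2) t := by
      have : HasDerivAt (fun s : ℝ => s ^ 2) (2 * t) t := by
        simpa using hasDerivAt_pow 2 t
      have := ((this.const_mul L).div_const 2).mul_const (‖y - x‖ ^ 2)
      have e : L * t * ‖y - x‖ ^ 2 = L * (2 * t) / 2 * ‖y - x‖ ^ 2 := by ring
      rw [e]
      exact this
    exact (h1.sub h2).sub h3
  have hdiff : Differentiable ℝ ψ := fun t => (hd t).differentiableAt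
  have hmono : AntitoneOn ψ (Set.Icc 0 1) := by
    apply antitoneOn_of_deriv_nonpos (convex_Icc 0 1) hdiff.continuous.continuousOn
      (hdiff.differentiableOn)
    · intro t ht
      rw [interior_Icc] at ht
      rw [(hd t).deriv]
      have hbd : ⟪gf (x + t • (y - x)) - gf x, y - x⟫ ≤ L * t * ‖y - x‖ ^ 2 := by
        calc ⟪gf (x + t • (y - x)) - gf x, y - x⟫ ≤ ‖gf (x + t • (y - x)) - gf x‖ * ‖y - x‖ :=
              real_inner_le_norm _ _
          _ ≤ (L * ‖(x + t • (y - x)) - x‖) * ‖y - x‖ :=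
              mul_le_mul_of_nonneg_right (hLip _ _) (norm_nonneg _)
          _ = L * t * ‖y - x‖ ^ 2 := by
              rw [add_sub_cancel_left, norm_smul]
              simp [abs_of_nonneg ht.1.le]
              ring
      rw [inner_sub_left] at hbd
      linarith
  have h01 := hmono (Set.mem_Icc.2 ⟨le_refl 0, zero_le_one⟩)
    (Set.mem_Icc.2 ⟨zero_le_one, le_refl 1⟩) zero_le_one
  simp only [hψ] at h01
  simp only [zero_smul, add_zero, one_smul, zero_mul, zero_pow, sub_zero, mul_zero,
    mul_one, one_pow, add_sub_cancel] at h01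
  norm_num at h01
  linarith

end Helpers



/-- the standard stepsize induction for strongly convex SGD rates -/
lemma seq_rate {D : ℕ → ℝ} {ν γ c M : ℝ}
    (hM : 0 ≤ M) (hν : 0 ≤ ν) (ht1 : 1 < 2 * c * γ) (ht2 : 2 * c * γ ≤ 2)
    (hA : 2 * γ ^ 2 * M ≤ (2 * c * γ - 1) * ν)
    (hD0 : ∀ k, 0 ≤ D k) (hD1 : D 1 ≤ ν)
    (hrec : ∀ k : ℕ, 1 ≤ k → D (k + 1) ≤ (1 - 2 * c * γ / k) * D k + (γ / k) ^ 2 * M) :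
    ∀ k : ℕ, 1 ≤ k → D k ≤ ν / k := by
  intro k hk
  induction k with
  | zero => omega
  | succ k ih =>
    rcases Nat.eq_zero_or_pos k with hk0 | hk1
    · subst hk0; simpa using hD1
    · have ihk := ih hk1
      have hKr : (1 : ℝ) ≤ (k : ℝ) := by exact_mod_cast hk1
      have hKpos : (0 : ℝ) < (k : ℝ) := by linarith
      have hrec' := hrec k hk1
      have hcast : ((k + 1 : ℕ) : ℝ) = (k : ℝ) + 1 := by push_cast; ring
      rw [hcast]
      have hK1pos : (0 : ℝ) < (k : ℝ) + 1 := by linarith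
      rcases le_or_gt 0 (1 - 2 * c * γ / (k : ℝ)) with hpos | hneg
      · have step1 : D (k + 1) ≤ (1 - 2 * c * γ / k) * (ν / k) + (γ / k) ^ 2 * M := by
          refine hrec'.trans ?_
          have := mul_le_mul_of_nonneg_left ihk hpos
          linarith
        refine step1.trans ?_
        have key : (1 - 2 * c * γ / k) * (ν / k) + (γ / k) ^ 2 * M
            = (ν * k - 2 * c * γ * ν + γ ^ 2 * M) / (k : ℝ) ^ 2 := by
          field_simp
        rw [key, div_le_div_iff₀ (by positivity) hK1pos]
        have h6 : ν ≤ 2 * c * γ * ν - γ ^ 2 * M := by nlinarith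
        have h7 := mul_le_mul_of_nonneg_left h6 (by linarith : (0:ℝ) ≤ (k:ℝ) + 1)
        nlinarith [mul_nonneg hν (by linarith : (0:ℝ) ≤ (k:ℝ))]
      · have step1 : D (k + 1) ≤ (γ / k) ^ 2 * M := by
          refine hrec'.trans ?_
          have : (1 - 2 * c * γ / k) * D k ≤ 0 :=
            mul_nonpos_of_nonpos_of_nonneg hneg.le (hD0 k)
          linarith
        refine step1.trans ?_
        have hγM : 2 * γ ^ 2 * M ≤ ν := by nlinarith
        rw [div_pow, div_mul_eq_mul_div, div_le_div_iff₀ (by positivity) hK1pos]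
        have h8 : 0 ≤ γ ^ 2 * M := by positivity
        nlinarith [sq_nonneg ((k:ℝ) - 1), mul_le_mul_of_nonneg_right hγM (sq_nonneg ((k:ℝ)))]

/-- `√(∑ aᵢ²) ≤ ∑ aᵢ` for nonnegative `aᵢ` -/
lemma sqrt_sum_sq_le_sum {ι : Type*} (s : Finset ι) (a : ι → ℝ) (ha : ∀ i ∈ s, 0 ≤ a i) :
    Real.sqrt (∑ i ∈ s, a i ^ 2) ≤ ∑ i ∈ s, a i := by
  have h1 : (∑ i ∈ s, a i ^ 2) ≤ (∑ i ∈ s, a i) ^ 2 := by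
    rw [sq (∑ i ∈ s, a i), Finset.sum_mul]
    refine Finset.sum_le_sum fun i hi => ?_
    rw [sq]
    exact mul_le_mul_of_nonneg_left (Finset.single_le_sum ha hi) (ha i hi)
  calc Real.sqrt (∑ i ∈ s, a i ^ 2) ≤ Real.sqrt ((∑ i ∈ s, a i) ^ 2) := Real.sqrt_le_sqrt h1
    _ = ∑ i ∈ s, a i := Real.sqrt_sq (Finset.sum_nonneg ha)

/-- coordinates are bounded by the euclidean norm -/
lemma abs_coord_le_norm {d : ℕ} (v : EuclideanSpace ℝ (Fin d)) (j : Fin d) : |v j| ≤ ‖v‖ := by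
  rw [EuclideanSpace.norm_eq]
  rw [← Real.sqrt_sq (abs_nonneg (v j))]
  apply Real.sqrt_le_sqrt
  rw [sq_abs]
  refine Finset.single_le_sum (f := fun i => ‖v i‖ ^ 2) (fun i _ => by positivity) (Finset.mem_univ j) |>.trans_eq' ?_
  simp [Real.norm_eq_abs, sq_abs]

/-- conditional expectation commutes with euclidean coordinates -/
lemma condexp_euclid_apply {Ω : Type*} {m m0 : MeasurableSpace Ω} (hm : m ≤ m0)
    (μ : Measure Ω) [IsFiniteMeasure μ] {d : ℕ} {f : Ω → EuclideanSpace ℝ (Fin d)}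
    (hf : Integrable f μ) (j : Fin d) :
    (fun ω => (μ[f|m]) ω j) =ᵐ[μ] μ[fun ω => f ω j|m] := by
  set P : EuclideanSpace ℝ (Fin d) →L[ℝ] ℝ := EuclideanSpace.proj j with hP
  have hPapp : ∀ w : EuclideanSpace ℝ (Fin d), P w = w j := fun w => rfl
  refine ae_eq_condExp_of_forall_setIntegral_eq hm
    (by simpa [hPapp] using P.integrable_comp hf)
    (fun s _ _ => ?_) (fun s hs hμs => ?_) ?_
  · exact (by simpa [hPapp] using P.integrable_comp (integrable_condExp (f := f) (m := m)) :
      Integrable (fun ω => (μ[f|m]) ω j) μ).integrableOn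
  · have h1 := ContinuousLinearMap.integral_comp_comm P
      (integrable_condExp (f := f) (m := m)).integrableOn (μ := μ.restrict s)
    have h2 := ContinuousLinearMap.integral_comp_comm P hf.integrableOn (μ := μ.restrict s)
    simp only [hPapp] at h1 h2
    rw [h1, h2, setIntegral_condExp hm hf hs]
  · have := P.continuous.comp_stronglyMeasurable
      (stronglyMeasurable_condExp (f := f) (m := m) (μ := μ))
    exact StronglyMeasurable.aestronglyMeasurable (by simpa [hPapp] using this)

/-- when the conditional expectation of `e` vanishes, `∫ ⟪v, e⟫ = 0`
for `m`-measurable bounded `v` -/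
lemma integral_inner_condexp_zero {Ω : Type*} {m m0 : MeasurableSpace Ω} (hm : m ≤ m0)
    {μ : Measure Ω} [IsProbabilityMeasure μ] {d : ℕ} {v e : Ω → EuclideanSpace ℝ (Fin d)}
    (hv : StronglyMeasurable[m] v) {B : ℝ} (hvB : ∀ ω, ‖v ω‖ ≤ B)
    (he : Integrable e μ) (hce : μ[e|m] =ᵐ[μ] 0) :
    ∫ ω, ⟪v ω, e ω⟫ ∂μ = 0 := by
  have hvm : AEStronglyMeasurable v μ := (hv.mono hm).aestronglyMeasurable
  have hej : ∀ j : Fin d, Integrable (fun ω => e ω j) μ := fun j =>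
    (EuclideanSpace.proj j : EuclideanSpace ℝ (Fin d) →L[ℝ] ℝ).integrable_comp he
  have hprod : ∀ j : Fin d, Integrable (fun ω => v ω j * e ω j) μ := by
    intro j
    refine Integrable.mono' ((hej j).norm.const_mul B) ?_ ?_
    · have hP : Continuous fun w : EuclideanSpace ℝ (Fin d) => w j :=
        (EuclideanSpace.proj j : EuclideanSpace ℝ (Fin d) →L[ℝ] ℝ).continuous
      exact (hP.comp_aestronglyMeasurable hvm).mul (hej j).aestronglyMeasurable
    · filter_upwards with ω
      rw [Real.norm_eq_abs, abs_mul]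
      apply mul_le_mul_of_nonneg_right _ (abs_nonneg _)
      exact (abs_coord_le_norm (v ω) j).trans (hvB ω)
  have hinner : ∀ ω, ⟪v ω, e ω⟫ = ∑ j : Fin d, v ω j * e ω j := by
    intro ω
    simp [PiLp.inner_apply, RCLike.inner_apply, conj_trivial]
    exact Finset.sum_congr rfl fun _ _ => mul_comm _ _
  calc ∫ ω, ⟪v ω, e ω⟫ ∂μ = ∫ ω, ∑ j : Fin d, v ω j * e ω j ∂μ := by
        simp_rw [hinner]
    _ = ∑ j : Fin d, ∫ ω, v ω j * e ω j ∂μ := integral_finset_sum _ fun j _ => hprod j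
    _ = 0 := by
      refine Finset.sum_eq_zero fun j _ => ?_
      have hcj : μ[fun ω => e ω j|m] =ᵐ[μ] 0 := by
        refine (condexp_euclid_apply hm μ he j).symm.trans ?_
        filter_upwards [hce] with ω hω
        simp [hω]
      have hPc : Continuous fun w : EuclideanSpace ℝ (Fin d) => w j :=
        (EuclideanSpace.proj j : EuclideanSpace ℝ (Fin d) →L[ℝ] ℝ).continuous
      have hmul := condExp_mul_of_stronglyMeasurable_left
        (hPc.comp_stronglyMeasurable hv) (hprod j) (hej j)
      calc ∫ ω, v ω j * e ω j ∂μ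
            = ∫ ω, (μ[((fun ω' => v ω' j) * fun ω' => e ω' j : Ω → ℝ)|m]) ω ∂μ :=
            (integral_condExp hm).symm
        _ = ∫ _ω, (0:ℝ) ∂μ := by
          refine integral_congr_ae ?_
          filter_upwards [hmul, hcj] with ω h1 h2
          rw [h1]
          simp only [Pi.mul_apply, h2, Pi.zero_apply, mul_zero]
        _ = 0 := by simp
    

/-- Theorem 5.2, second bound: under strong convexity, `⟪∇ₓS(x_*,λ_k), x_k − x_*⟫ ≥ 0` a.s.,
`∇ₓS(x_*,λ_*) = 0`, and stepsizes `α_k = γ/k` with `1/(2c) < γ ≤ 1/c`,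
`E[S(x_k,λ_*)] − S(x_*,λ_*) ≤ (L/2)·max{2γ²M̄(2cγ − 1)⁻¹, ‖x₀ − x_*‖²}/k`. -/
theorem stmt2 {n m : ℕ} {Ω : Type*} {mΩ : MeasurableSpace Ω}
    (μ : Measure Ω) [IsProbabilityMeasure μ]
    -- the feasible region
    (X : Set (EuclideanSpace ℝ (Fin n))) (hXne : X.Nonempty) (hXcl : IsClosed X)
    (hXcv : Convex ℝ X) (Θ : ℝ) (hdiam : ∀ x ∈ X, ∀ y ∈ X, ‖x - y‖ ≤ Θ)
    -- the objective functions and their gradients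
    (f : Fin m → EuclideanSpace ℝ (Fin n) → ℝ)
    (gf : Fin m → EuclideanSpace ℝ (Fin n) → EuclideanSpace ℝ (Fin n))
    (hgrad : ∀ i x, HasGradientAt (f i) (gf i x) x)
    (L : Fin m → ℝ) (hLpos : ∀ i, 0 < L i)
    (hLip : ∀ i (x y : EuclideanSpace ℝ (Fin n)), ‖gf i x - gf i y‖ ≤ L i * ‖x - y‖)
    (Lc : ℝ) (hLc : IsGreatest (Set.range L) Lc)
    (Mgrad : ℝ) (hgfbd : ∀ i, ∀ x ∈ X, ‖gf i x‖ ≤ Mgrad + Lc * Θ)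
    -- strong convexity
    (cv : Fin m → ℝ) (hcv : ∀ i, 0 < cv i)
    (hsc : ∀ i (x y : EuclideanSpace ℝ (Fin n)),
      f i y ≥ f i x + ⟪gf i x, y - x⟫ + cv i / 2 * ‖y - x‖ ^ 2)
    (c : ℝ) (hc : IsLeast (Set.range cv) c)
    -- the σ-algebras generated by the information up to iteration k
    (𝒢 : ℕ → MeasurableSpace Ω) (h𝒢 : ∀ k, 𝒢 k ≤ mΩ)
    -- stepsizes
    (α : ℕ → ℝ) (hαpos : ∀ k, 0 < α k)
    (γ : ℝ) (hγ1 : 1 / (2 * c) < γ) (hγ2 : γ ≤ 1 / c)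
    (hstep : ∀ k : ℕ, 1 ≤ k → α k = γ / (k : ℝ))
    -- iterates, stochastic gradients and subproblem solutions
    (x : ℕ → Ω → EuclideanSpace ℝ (Fin n))
    (x0 : EuclideanSpace ℝ (Fin n)) (hx0X : x0 ∈ X) (hx0 : ∀ ω, x 0 ω = x0)
    (hxmeas : ∀ k, StronglyMeasurable[𝒢 k] (x k))
    (hxX : ∀ k ω, x k ω ∈ X)
    (g : Fin m → ℕ → Ω → EuclideanSpace ℝ (Fin n))
    (hgL2 : ∀ i k, MemLp (g i k) 2 μ)
    (lamg lam : ℕ → Ω → EuclideanSpace ℝ (Fin m))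
    (hlamg_meas : ∀ k, Measurable (lamg k))
    (hlam_meas : ∀ k, StronglyMeasurable[𝒢 k] (lam k))
    (hlamg : ∀ k ω, WithLp.ofLp (lamg k ω) ∈ stdSimplex ℝ (Fin m) ∧
      ∀ z ∈ stdSimplex ℝ (Fin m),
        ‖∑ i, lamg k ω i • g i k ω‖ ^ 2 ≤ ‖∑ i, z i • g i k ω‖ ^ 2)
    (hlam : ∀ k ω, WithLp.ofLp (lam k ω) ∈ stdSimplex ℝ (Fin m) ∧
      ∀ z ∈ stdSimplex ℝ (Fin m),
        ‖∑ i, lam k ω i • gf i (x k ω)‖ ^ 2 ≤ ‖∑ i, z i • gf i (x k ω)‖ ^ 2)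
    -- the projected stochastic multi-gradient update
    (hupd : ∀ k ω, x (k + 1) ω ∈ X ∧ ∀ y ∈ X,
      ‖x k ω - α k • (∑ i, lamg k ω i • g i k ω) - x (k + 1) ω‖ ≤
      ‖x k ω - α k • (∑ i, lamg k ω i • g i k ω) - y‖)
    -- assumption (a): unbiasedness
    (ha : ∀ i k, μ[g i k | 𝒢 k] =ᵐ[μ] fun ω => gf i (x k ω))
    -- assumption (b): bound on the first moment
    (C Chat : Fin m → ℝ) (hC : ∀ i, 0 < C i) (hChat : ∀ i, 0 < Chat i)
    (hb : ∀ i k, ∀ᵐ ω ∂μ,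
      (μ[fun ω' => ‖g i k ω' - gf i (x k ω')‖ | 𝒢 k]) ω ≤
        α k * (C i + Chat i * ‖gf i (x k ω)‖))
    -- assumption (c): bound on the second moment
    (G Ghat : Fin m → ℝ) (hG : ∀ i, 0 < G i) (hGhat : ∀ i, 0 < Ghat i)
    (hc2 : ∀ i k, ∀ᵐ ω ∂μ,
      (μ[fun ω' => ‖g i k ω' - gf i (x k ω')‖ ^ 2 | 𝒢 k]) ω ≤
        G i ^ 2 + Ghat i ^ 2 * ‖gf i (x k ω)‖ ^ 2)
    -- subproblem Lipschitz continuity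
    (β : ℝ) (hβ : 0 < β)
    (hsub : ∀ k, ∀ᵐ ω ∂μ,
      ‖lamg k ω - lam k ω‖ ≤ β * Real.sqrt (∑ i, ‖g i k ω - gf i (x k ω)‖ ^ 2))
    -- the constants
    (M1 MF LS Gmax Lg2 MS : ℝ)
    (hM1 : M1 = ∑ i, C i) (hMF : IsGreatest (Set.range Chat) MF)
    (hLS : LS = M1 + (m : ℝ) * MF * (Mgrad + Lc * Θ))
    (hGmax : IsGreatest (Set.range fun i => Ghat i ^ 2 + 1) Gmax)
    (hLg2 : Lg2 = (m : ℝ) * (∑ i, G i ^ 2) + (m : ℝ) * ((m : ℝ) * Gmax) * (Mgrad + Lc * Θ) ^ 2)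
    (hMS : MS = Real.sqrt ((m : ℝ) * (n : ℝ)) * (Mgrad + Lc * Θ))
    (Mbar : ℝ) (hMbar : Mbar = Lg2 + 2 * Θ * (LS + β * LS * MS))
    -- the Pareto minimizer and Assumption 5.2
    (xstar : EuclideanSpace ℝ (Fin n)) (hxstarX : xstar ∈ X)
    (hstar : ∀ k, ∀ᵐ ω ∂μ, 0 ≤ ⟪∑ i, lam k ω i • gf i xstar, x k ω - xstar⟫)
    (lamstar : Fin m → ℝ) (hlamstar : lamstar ∈ stdSimplex ℝ (Fin m))
    (hstat : ∑ i, lamstar i • gf i xstar = 0) :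
    ∀ k : ℕ, 1 ≤ k →
      (∫ ω, ∑ i, lamstar i * f i (x k ω) ∂μ) - (∑ i, lamstar i * f i xstar) ≤
        Lc / 2 * (max (2 * γ ^ 2 * Mbar * (2 * c * γ - 1)⁻¹) (‖x0 - xstar‖ ^ 2) / (k : ℝ)) := by
  classical
  -- basic facts about the constants
  obtain ⟨i0, hi0⟩ := hc.1
  have hc0 : 0 < c := hi0 ▸ hcv i0
  obtain ⟨iL, hiL⟩ := hLc.1
  have hLc0 : 0 < Lc := hiL ▸ hLpos iL
  have hm1 : 0 < m := Fin.pos i0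
  have hm1r : (1 : ℝ) ≤ (m : ℝ) := by exact_mod_cast hm1
  have hγ0 : 0 < γ := lt_trans (by positivity) hγ1
  have ht1 : 1 < 2 * c * γ := by
    rw [div_lt_iff₀ (by positivity)] at hγ1
    linarith
  have ht2 : 2 * c * γ ≤ 2 := by
    rw [le_div_iff₀ hc0] at hγ2
    nlinarith
  have hΘ0 : 0 ≤ Θ := by
    obtain ⟨z, hz⟩ := hXne
    simpa using hdiam z hz z hz
  have hB0 : 0 ≤ Mgrad + Lc * Θ := by
    obtain ⟨z, hz⟩ := hXne
    exact le_trans (norm_nonneg _) (hgfbd i0 z hz)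
  have hRHS0 : ∀ k : ℕ,
      0 ≤ Lc / 2 * (max (2 * γ ^ 2 * Mbar * (2 * c * γ - 1)⁻¹) (‖x0 - xstar‖ ^ 2) / (k : ℝ)) := by
    intro k
    apply mul_nonneg (by positivity)
    exact div_nonneg (le_trans (sq_nonneg _) (le_max_right _ _)) (Nat.cast_nonneg k)
  -- the degenerate case n = 0
  rcases Nat.eq_zero_or_pos n with hn | hn
  · subst hn
    intro k hk
    have hxx : ∀ ω, x k ω = xstar := fun ω => by ext i; exact i.elim0
    have hLHS : (∫ ω, ∑ i, lamstar i * f i (x k ω) ∂μ) = ∑ i, lamstar i * f i xstar := by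
      simp_rw [hxx]
      simp
    rw [hLHS, sub_self]
    exact hRHS0 k
  -- now the main case `n ≥ 1`
  have hn1r : (1 : ℝ) ≤ (n : ℝ) := by exact_mod_cast hn
  -- more constants
  have hgb : ∀ i k ω, ‖gf i (x k ω)‖ ≤ Mgrad + Lc * Θ := fun i k ω => hgfbd i _ (hxX k ω)
  have hMF0 : 0 < MF := by obtain ⟨i, hi⟩ := hMF.1; exact hi ▸ hChat i
  have hM10 : 0 < M1 := by
    rw [hM1]
    exact Finset.sum_pos (fun i _ => hC i) ⟨i0, Finset.mem_univ i0⟩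
  have hLS0 : 0 ≤ LS := by
    rw [hLS]
    have h1 : (0:ℝ) ≤ (m : ℝ) * MF * (Mgrad + Lc * Θ) :=
      mul_nonneg (mul_nonneg (Nat.cast_nonneg m) hMF0.le) hB0
    linarith
  have hGmax1 : 1 ≤ Gmax := by
    obtain ⟨i, hi⟩ := hGmax.1
    rw [← hi]
    show (1:ℝ) ≤ Ghat i ^ 2 + 1
    nlinarith [sq_nonneg (Ghat i)]
  have hMS0 : 0 ≤ MS := by
    rw [hMS]
    positivity
  have hGsum0 : (0:ℝ) ≤ ∑ i, G i ^ 2 := Finset.sum_nonneg fun i _ => sq_nonneg (G i)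
  have hLg2B : (Mgrad + Lc * Θ) ^ 2 ≤ Lg2 := by
    rw [hLg2]
    have h2a : (1:ℝ) ≤ (m:ℝ) * Gmax := le_trans hGmax1 (le_mul_of_one_le_left (by linarith) hm1r)
    have h2 : (1:ℝ) ≤ (m:ℝ) * ((m:ℝ) * Gmax) := le_trans h2a (le_mul_of_one_le_left (by linarith) hm1r)
    have h3 : 0 ≤ ((m:ℝ) * ((m:ℝ) * Gmax) - 1) * (Mgrad + Lc * Θ) ^ 2 :=
      mul_nonneg (by linarith) (sq_nonneg _)
    have h4 : 0 ≤ (m:ℝ) * ∑ i, G i ^ 2 := mul_nonneg (by linarith) hGsum0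
    linarith only [h3, h4]
  have hLg20 : 0 ≤ Lg2 := le_trans (sq_nonneg _) hLg2B
  have hMbarLg2 : Lg2 ≤ Mbar := by
    rw [hMbar]
    have h1 : 0 ≤ β * LS * MS := mul_nonneg (mul_nonneg hβ.le hLS0) hMS0
    have h2 : 0 ≤ 2 * Θ * (LS + β * LS * MS) := mul_nonneg (by linarith) (by linarith)
    linarith
  have hMbar0 : 0 ≤ Mbar := le_trans hLg20 hMbarLg2
  -- weighted strong convexity
  have hkey : ∀ lam' : Fin m → ℝ, lam' ∈ stdSimplex ℝ (Fin m) →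
      ∀ a b : EuclideanSpace ℝ (Fin n),
      (∑ i, lam' i * f i a) + ⟪∑ i, lam' i • gf i a, b - a⟫ + c / 2 * ‖b - a‖ ^ 2
        ≤ ∑ i, lam' i * f i b := by
    intro lam' hl a b
    have h2 : ∑ i, lam' i * (f i a + ⟪gf i a, b - a⟫ + cv i / 2 * ‖b - a‖ ^ 2)
        ≤ ∑ i, lam' i * f i b :=
      Finset.sum_le_sum fun i _ => mul_le_mul_of_nonneg_left (hsc i a b) (hl.1 i)
    have hsum1 : ⟪∑ i, lam' i • gf i a, b - a⟫ = ∑ i, lam' i * ⟪gf i a, b - a⟫ := by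
      rw [sum_inner]
      simp_rw [real_inner_smul_left]
    have hcv' : c ≤ ∑ i, lam' i * cv i := by
      calc c = ∑ i, lam' i * c := by rw [← Finset.sum_mul, hl.2, one_mul]
        _ ≤ ∑ i, lam' i * cv i :=
          Finset.sum_le_sum fun i _ => mul_le_mul_of_nonneg_left (hc.2 ⟨i, rfl⟩) (hl.1 i)
    have hrhs : ∑ i, lam' i * (f i a + ⟪gf i a, b - a⟫ + cv i / 2 * ‖b - a‖ ^ 2)
        = (∑ i, lam' i * f i a) + (∑ i, lam' i * ⟪gf i a, b - a⟫)
          + (∑ i, lam' i * cv i) * (‖b - a‖ ^ 2 / 2) := by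
      rw [Finset.sum_mul, ← Finset.sum_add_distrib, ← Finset.sum_add_distrib]
      exact Finset.sum_congr rfl fun i _ => by ring
    rw [hrhs] at h2
    rw [hsum1]
    have hN : 0 ≤ ‖b - a‖ ^ 2 := sq_nonneg _
    have := mul_le_mul_of_nonneg_right hcv' (by linarith : (0:ℝ) ≤ ‖b - a‖ ^ 2 / 2)
    linarith only [h2, this]
  -- gradient monotonicity
  have hmono : ∀ lam' : Fin m → ℝ, lam' ∈ stdSimplex ℝ (Fin m) →
      ∀ a b : EuclideanSpace ℝ (Fin n),
      c * ‖a - b‖ ^ 2 + ⟪∑ i, lam' i • gf i b, a - b⟫ ≤ ⟪∑ i, lam' i • gf i a, a - b⟫ := by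
    intro lam' hl a b
    have h1 := hkey lam' hl a b
    have h2 := hkey lam' hl b a
    have e1 : ⟪∑ i, lam' i • gf i a, b - a⟫ = -⟪∑ i, lam' i • gf i a, a - b⟫ := by
      rw [← inner_neg_right]
      congr 1
      abel
    have e2 : ‖b - a‖ = ‖a - b‖ := norm_sub_rev _ _
    rw [e1, e2] at h1
    linarith only [h1, h2]
  -- norm bound on weighted gradients over X
  have hnormS : ∀ lam' : Fin m → ℝ, lam' ∈ stdSimplex ℝ (Fin m) →
      ∀ z ∈ X, ‖∑ i, lam' i • gf i z‖ ≤ Mgrad + Lc * Θ := by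
    intro lam' hl z hz
    calc ‖∑ i, lam' i • gf i z‖ ≤ ∑ i, ‖lam' i • gf i z‖ := norm_sum_le _ _
      _ ≤ ∑ i, lam' i * (Mgrad + Lc * Θ) := by
        refine Finset.sum_le_sum fun i _ => ?_
        rw [norm_smul, Real.norm_eq_abs, abs_of_nonneg (hl.1 i)]
        exact mul_le_mul_of_nonneg_left (hgfbd i z hz) (hl.1 i)
      _ = Mgrad + Lc * Θ := by rw [← Finset.sum_mul, hl.2, one_mul]
  -- distance to xstar is bounded by B/c on X
  have hdist : ∀ z ∈ X, ‖z - xstar‖ ≤ (Mgrad + Lc * Θ) / c := by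
    intro z hz
    have h1 := hmono lamstar hlamstar z xstar
    rw [hstat] at h1
    simp only [inner_zero_left, add_zero] at h1
    have h2 : ⟪∑ i, lamstar i • gf i z, z - xstar⟫ ≤ (Mgrad + Lc * Θ) * ‖z - xstar‖ := by
      refine le_trans (real_inner_le_norm _ _) ?_
      exact mul_le_mul_of_nonneg_right (hnormS lamstar hlamstar z hz) (norm_nonneg _)
    rcases eq_or_lt_of_le (norm_nonneg (z - xstar)) with hz0 | hz0
    · rw [← hz0]
      positivity
    · rw [le_div_iff₀ hc0]
      have h3 : c * ‖z - xstar‖ ^ 2 ≤ (Mgrad + Lc * Θ) * ‖z - xstar‖ := le_trans h1 h2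
      have h4 : (c * ‖z - xstar‖) * ‖z - xstar‖ ≤ (Mgrad + Lc * Θ) * ‖z - xstar‖ := by
        have e : (c * ‖z - xstar‖) * ‖z - xstar‖ = c * ‖z - xstar‖ ^ 2 := by ring
        rw [e]
        exact h3
      have h5 := le_of_mul_le_mul_right h4 hz0
      linarith only [h5]
  -- a quadratic upper bound on S(·, λ*) around xstar
  have hupper : ∀ z : EuclideanSpace ℝ (Fin n),
      ∑ i, lamstar i * f i z
        ≤ (∑ i, lamstar i * f i xstar) + Lc / 2 * ‖z - xstar‖ ^ 2 := by
    intro z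
    have h1 : ∀ i : Fin m, f i z ≤ f i xstar + ⟪gf i xstar, z - xstar⟫
        + Lc / 2 * ‖z - xstar‖ ^ 2 := by
      intro i
      have hd := descent_lemma (hgrad i) (hLip i) xstar z
      have hLL : L i / 2 * ‖z - xstar‖ ^ 2 ≤ Lc / 2 * ‖z - xstar‖ ^ 2 := by
        have h5 : L i ≤ Lc := hLc.2 ⟨i, rfl⟩
        exact mul_le_mul_of_nonneg_right (by linarith only [h5]) (sq_nonneg _)
      linarith only [hd, hLL]
    have h2 : ∑ i, lamstar i * f i z
        ≤ ∑ i, lamstar i * (f i xstar + ⟪gf i xstar, z - xstar⟫ + Lc / 2 * ‖z - xstar‖ ^ 2) :=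
      Finset.sum_le_sum fun i _ => mul_le_mul_of_nonneg_left (h1 i) (hlamstar.1 i)
    have h3 : ∑ i, lamstar i * (f i xstar + ⟪gf i xstar, z - xstar⟫ + Lc / 2 * ‖z - xstar‖ ^ 2)
        = (∑ i, lamstar i * f i xstar) + ⟪∑ i, lamstar i • gf i xstar, z - xstar⟫
          + (∑ i, lamstar i) * (Lc / 2 * ‖z - xstar‖ ^ 2) := by
      rw [sum_inner, Finset.sum_mul, ← Finset.sum_add_distrib, ← Finset.sum_add_distrib]
      refine Finset.sum_congr rfl fun i _ => ?_
      rw [real_inner_smul_left]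
      ring
    rw [h3, hstat, hlamstar.2] at h2
    simp only [inner_zero_left, add_zero, one_mul] at h2
    linarith only [h2]
  -- bound on the objective values over X (for integrability)
  have hfabs : ∀ z ∈ X, |∑ i, lamstar i * f i z|
      ≤ (∑ i, lamstar i * |f i xstar|) + ((Mgrad + Lc * Θ) * Θ + Lc / 2 * Θ ^ 2) := by
    intro z hz
    have hzd : ‖z - xstar‖ ≤ Θ := hdiam z hz xstar hxstarX
    have hfi : ∀ i : Fin m, |f i z| ≤ |f i xstar| + ((Mgrad + Lc * Θ) * Θ + Lc / 2 * Θ ^ 2) := by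
      intro i
      have hinn : |⟪gf i xstar, z - xstar⟫| ≤ (Mgrad + Lc * Θ) * Θ := by
        refine le_trans (abs_real_inner_le_norm _ _) ?_
        exact mul_le_mul (hgfbd i xstar hxstarX) hzd (norm_nonneg _) hB0
      have hup : f i z ≤ f i xstar + ⟪gf i xstar, z - xstar⟫ + Lc / 2 * ‖z - xstar‖ ^ 2 := by
        have hd := descent_lemma (hgrad i) (hLip i) xstar z
        have h5 : L i ≤ Lc := hLc.2 ⟨i, rfl⟩
        have hLL : L i / 2 * ‖z - xstar‖ ^ 2 ≤ Lc / 2 * ‖z - xstar‖ ^ 2 :=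
          mul_le_mul_of_nonneg_right (by linarith only [h5]) (sq_nonneg _)
        linarith only [hd, hLL]
      have hlo : f i xstar + ⟪gf i xstar, z - xstar⟫ ≤ f i z := by
        have h6 := hsc i xstar z
        have h7 : 0 ≤ cv i / 2 * ‖z - xstar‖ ^ 2 :=
          mul_nonneg (by linarith only [hcv i]) (sq_nonneg _)
        linarith only [h6, h7]
      have hsq : Lc / 2 * ‖z - xstar‖ ^ 2 ≤ Lc / 2 * Θ ^ 2 := by
        refine mul_le_mul_of_nonneg_left ?_ (by positivity)
        exact pow_le_pow_left₀ (norm_nonneg _) hzd 2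
      have h0R : 0 ≤ Lc / 2 * Θ ^ 2 := by positivity
      rw [abs_le]
      constructor
      · have e1 := neg_abs_le ⟪gf i xstar, z - xstar⟫
        have e2 := neg_abs_le (f i xstar)
        have e3 := abs_le.1 hinn
        linarith only [hlo, e1, e2, e3.1, h0R]
      · have e1 := le_abs_self ⟪gf i xstar, z - xstar⟫
        have e2 := le_abs_self (f i xstar)
        have e3 := abs_le.1 hinn
        linarith only [hup, hsq, e1, e2, e3.2]
    calc |∑ i, lamstar i * f i z| ≤ ∑ i, |lamstar i * f i z| := Finset.abs_sum_le_sum_abs _ _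
      _ ≤ ∑ i, lamstar i * (|f i xstar| + ((Mgrad + Lc * Θ) * Θ + Lc / 2 * Θ ^ 2)) := by
        refine Finset.sum_le_sum fun i _ => ?_
        rw [abs_mul, abs_of_nonneg (hlamstar.1 i)]
        exact mul_le_mul_of_nonneg_left (hfi i) (hlamstar.1 i)
      _ = (∑ i, lamstar i * |f i xstar|) + ((Mgrad + Lc * Θ) * Θ + Lc / 2 * Θ ^ 2) := by
        rw [Finset.sum_congr rfl (fun i _ => mul_add (lamstar i) _ _), Finset.sum_add_distrib,
          ← Finset.sum_mul, hlamstar.2, one_mul]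
  -- measurability and integrability facts
  have hgfc : ∀ i, Continuous (gf i) := by
    intro i
    refine (LipschitzWith.of_dist_le_mul (K := ⟨L i, (hLpos i).le⟩) fun a b => ?_).continuous
    rw [dist_eq_norm, dist_eq_norm]
    exact hLip i a b
  have hfc : ∀ i, Continuous (f i) := by
    intro i
    have hdif : Differentiable ℝ (f i) := fun z => (hgrad i z).hasFDerivAt.differentiableAt
    exact hdif.continuous
  have hxaem : ∀ k, AEStronglyMeasurable (x k) μ :=
    fun k => ((hxmeas k).mono (h𝒢 k)).aestronglyMeasurable
  have hgfmeas : ∀ i k, StronglyMeasurable[𝒢 k] fun ω => gf i (x k ω) :=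
    fun i k => (hgfc i).comp_stronglyMeasurable (hxmeas k)
  have hgfL2 : ∀ i k, MemLp (fun ω => gf i (x k ω)) 2 μ := fun i k =>
    MemLp.of_bound ((hgfmeas i k).mono (h𝒢 k)).aestronglyMeasurable _
      (Filter.Eventually.of_forall (hgb i k))
  have hgfint : ∀ i k, Integrable (fun ω => gf i (x k ω)) μ :=
    fun i k => (hgfL2 i k).integrable one_le_two
  have heL2 : ∀ i k, MemLp (fun ω => g i k ω - gf i (x k ω)) 2 μ :=
    fun i k => (hgL2 i k).sub (hgfL2 i k)
  have heint : ∀ i k, Integrable (fun ω => g i k ω - gf i (x k ω)) μ :=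
    fun i k => (heL2 i k).integrable one_le_two
  have henormint : ∀ i k, Integrable (fun ω => ‖g i k ω - gf i (x k ω)‖) μ :=
    fun i k => (heint i k).norm
  have henormsqint : ∀ i k, Integrable (fun ω => ‖g i k ω - gf i (x k ω)‖ ^ 2) μ :=
    fun i k => (heL2 i k).norm.integrable_sq
  have hgint : ∀ i k, Integrable (g i k) μ := fun i k => (hgL2 i k).integrable one_le_two
  have hgnormsqint : ∀ i k, Integrable (fun ω => ‖g i k ω‖ ^ 2) μ :=
    fun i k => (hgL2 i k).norm.integrable_sq
  have hlamgcoord : ∀ k (i : Fin m), AEStronglyMeasurable (fun ω => lamg k ω i) μ := by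
    intro k i
    have hP : Continuous fun w : EuclideanSpace ℝ (Fin m) => w i :=
      (EuclideanSpace.proj i : EuclideanSpace ℝ (Fin m) →L[ℝ] ℝ).continuous
    exact hP.comp_aestronglyMeasurable (hlamg_meas k).aestronglyMeasurable
  have hGsmeas : ∀ k, AEStronglyMeasurable (fun ω => ∑ i, lamg k ω i • g i k ω) μ := by
    intro k
    exact Finset.aestronglyMeasurable_fun_sum _ fun i _ =>
      (hlamgcoord k i).smul (hgL2 i k).aestronglyMeasurable
  have hdmeas : ∀ k, AEStronglyMeasurable (fun ω => x k ω - xstar) μ :=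
    fun k => (hxaem k).sub aestronglyMeasurable_const
  have hdbd : ∀ k ω, ‖x k ω - xstar‖ ≤ Θ := fun k ω => hdiam _ (hxX k ω) _ hxstarX
  have haint : ∀ k, Integrable (fun ω => ‖x k ω - xstar‖ ^ 2) μ := by
    intro k
    refine Integrable.mono' (integrable_const (Θ ^ 2))
      ((continuous_norm.pow 2).comp_aestronglyMeasurable (hdmeas k)) ?_
    filter_upwards with ω
    rw [Real.norm_eq_abs, abs_of_nonneg (sq_nonneg _)]
    exact pow_le_pow_left₀ (norm_nonneg _) (hdbd k ω) 2
  -- conditional expectation of the gradient noise vanishes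
  have hcezero : ∀ i k, μ[fun ω => g i k ω - gf i (x k ω)|𝒢 k] =ᵐ[μ] 0 := by
    intro i k
    have he : (fun ω => g i k ω - gf i (x k ω)) = (g i k - fun ω => gf i (x k ω)) := rfl
    rw [he]
    have h1 := condExp_sub (m := 𝒢 k) (μ := μ) (hgint i k) (hgfint i k)
    have h2 := condExp_of_stronglyMeasurable (h𝒢 k) (hgfmeas i k) (hgfint i k)
    filter_upwards [h1, ha i k] with ω hω1 hω2
    rw [hω1]
    have h3 := congrFun h2 ω
    simp only [Pi.sub_apply, Pi.zero_apply]
    rw [h3]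
    simp only [hω2]
    simp
  -- first moment bound in expectation
  have hEe1 : ∀ i k, ∫ ω, ‖g i k ω - gf i (x k ω)‖ ∂μ
      ≤ α k * (C i + Chat i * (Mgrad + Lc * Θ)) := by
    intro i k
    have h0 : ∀ᵐ ω ∂μ, (μ[fun ω' => ‖g i k ω' - gf i (x k ω')‖|𝒢 k]) ω
        ≤ α k * (C i + Chat i * (Mgrad + Lc * Θ)) := by
      filter_upwards [hb i k] with ω hω
      refine hω.trans ?_
      have h1 : Chat i * ‖gf i (x k ω)‖ ≤ Chat i * (Mgrad + Lc * Θ) :=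
        mul_le_mul_of_nonneg_left (hgb i k ω) (hChat i).le
      have h2 := (hαpos k).le
      have h3 : C i + Chat i * ‖gf i (x k ω)‖ ≤ C i + Chat i * (Mgrad + Lc * Θ) := by
        linarith only [h1]
      exact mul_le_mul_of_nonneg_left h3 h2
    calc ∫ ω, ‖g i k ω - gf i (x k ω)‖ ∂μ
        = ∫ ω, (μ[fun ω' => ‖g i k ω' - gf i (x k ω')‖|𝒢 k]) ω ∂μ :=
          (integral_condExp (h𝒢 k)).symm
      _ ≤ ∫ _ω, α k * (C i + Chat i * (Mgrad + Lc * Θ)) ∂μ :=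
          integral_mono_ae integrable_condExp (integrable_const _) h0
      _ = α k * (C i + Chat i * (Mgrad + Lc * Θ)) := by simp
  -- second moment bound in expectation
  have hEe2 : ∀ i k, ∫ ω, ‖g i k ω - gf i (x k ω)‖ ^ 2 ∂μ
      ≤ G i ^ 2 + Ghat i ^ 2 * (Mgrad + Lc * Θ) ^ 2 := by
    intro i k
    have h0 : ∀ᵐ ω ∂μ, (μ[fun ω' => ‖g i k ω' - gf i (x k ω')‖ ^ 2|𝒢 k]) ω
        ≤ G i ^ 2 + Ghat i ^ 2 * (Mgrad + Lc * Θ) ^ 2 := by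
      filter_upwards [hc2 i k] with ω hω
      refine hω.trans ?_
      have h1 : ‖gf i (x k ω)‖ ^ 2 ≤ (Mgrad + Lc * Θ) ^ 2 :=
        pow_le_pow_left₀ (norm_nonneg _) (hgb i k ω) 2
      have h2 : Ghat i ^ 2 * ‖gf i (x k ω)‖ ^ 2 ≤ Ghat i ^ 2 * (Mgrad + Lc * Θ) ^ 2 :=
        mul_le_mul_of_nonneg_left h1 (sq_nonneg _)
      linarith only [h2]
    calc ∫ ω, ‖g i k ω - gf i (x k ω)‖ ^ 2 ∂μ
        = ∫ ω, (μ[fun ω' => ‖g i k ω' - gf i (x k ω')‖ ^ 2|𝒢 k]) ω ∂μ :=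
          (integral_condExp (h𝒢 k)).symm
      _ ≤ ∫ _ω, G i ^ 2 + Ghat i ^ 2 * (Mgrad + Lc * Θ) ^ 2 ∂μ :=
          integral_mono_ae integrable_condExp (integrable_const _) h0
      _ = G i ^ 2 + Ghat i ^ 2 * (Mgrad + Lc * Θ) ^ 2 := by simp
  -- the unbiasedness cross term vanishes
  have hcross : ∀ i k, ∫ ω, ⟪gf i (x k ω), g i k ω - gf i (x k ω)⟫ ∂μ = 0 :=
    fun i k => integral_inner_condexp_zero (h𝒢 k) (hgfmeas i k) (hgb i k)
      (heint i k) (hcezero i k)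
  have hΘ'0 : 0 ≤ Θ * (1 + β * MS) := by
    have h1 : 0 ≤ β * MS := mul_nonneg hβ.le hMS0
    exact mul_nonneg hΘ0 (by linarith only [h1])
  -- pointwise (a.e.) lower bound on the key inner product
  have hinnerlb : ∀ k, ∀ᵐ ω ∂μ,
      c * ‖x k ω - xstar‖ ^ 2
        - Θ * (1 + β * MS) * (∑ i, ‖g i k ω - gf i (x k ω)‖)
        ≤ ⟪∑ i, lamg k ω i • g i k ω, x k ω - xstar⟫ := by
    intro k
    filter_upwards [hstar k, hsub k] with ω h1 h2
    have hlg := (hlamg k ω).1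
    have hsum_e0 : 0 ≤ ∑ i, ‖g i k ω - gf i (x k ω)‖ :=
      Finset.sum_nonneg fun i _ => norm_nonneg _
    have hle1 : ∀ i, lamg k ω i ≤ 1 := by
      intro i
      have h := Finset.single_le_sum (f := fun j => lamg k ω j)
        (fun j _ => hlg.1 j) (Finset.mem_univ i)
      rw [hlg.2] at h
      exact h
    have hdecomp : (∑ i, lamg k ω i • g i k ω)
        = (∑ i, lam k ω i • gf i (x k ω))
          + ((∑ i, (lamg k ω i - lam k ω i) • gf i (x k ω))
            + (∑ i, lamg k ω i • (g i k ω - gf i (x k ω)))) := by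
      rw [← Finset.sum_add_distrib, ← Finset.sum_add_distrib]
      refine Finset.sum_congr rfl fun i _ => ?_
      module
    have hT1 : c * ‖x k ω - xstar‖ ^ 2
        ≤ ⟪∑ i, lam k ω i • gf i (x k ω), x k ω - xstar⟫ := by
      have h3 := hmono (lam k ω) (hlam k ω).1 (x k ω) xstar
      linarith only [h3, h1]
    have hT3 : -(Θ * ∑ i, ‖g i k ω - gf i (x k ω)‖)
        ≤ ⟪∑ i, lamg k ω i • (g i k ω - gf i (x k ω)), x k ω - xstar⟫ := by
      have hnorm : ‖∑ i, lamg k ω i • (g i k ω - gf i (x k ω))‖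
          ≤ ∑ i, ‖g i k ω - gf i (x k ω)‖ := by
        refine le_trans (norm_sum_le _ _) (Finset.sum_le_sum fun i _ => ?_)
        rw [norm_smul, Real.norm_eq_abs, abs_of_nonneg (hlg.1 i)]
        exact mul_le_of_le_one_left (norm_nonneg _) (hle1 i)
      have habs := abs_real_inner_le_norm
        (∑ i, lamg k ω i • (g i k ω - gf i (x k ω))) (x k ω - xstar)
      have h4 : ‖∑ i, lamg k ω i • (g i k ω - gf i (x k ω))‖ * ‖x k ω - xstar‖
          ≤ (∑ i, ‖g i k ω - gf i (x k ω)‖) * Θ :=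
        mul_le_mul hnorm (hdbd k ω) (norm_nonneg _) hsum_e0
      have h5 := neg_abs_le
        ⟪∑ i, lamg k ω i • (g i k ω - gf i (x k ω)), x k ω - xstar⟫
      linarith only [habs, h4, h5]
    have hT2 : -(Θ * (β * MS * ∑ i, ‖g i k ω - gf i (x k ω)‖))
        ≤ ⟪∑ i, (lamg k ω i - lam k ω i) • gf i (x k ω), x k ω - xstar⟫ := by
      have hs1 : ‖∑ i, (lamg k ω i - lam k ω i) • gf i (x k ω)‖
          ≤ ∑ i, |lamg k ω i - lam k ω i| * (Mgrad + Lc * Θ) := by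
        refine le_trans (norm_sum_le _ _) (Finset.sum_le_sum fun i _ => ?_)
        rw [norm_smul, Real.norm_eq_abs]
        exact mul_le_mul_of_nonneg_left (hgb i k ω) (abs_nonneg _)
      have hΔnorm : ‖lamg k ω - lam k ω‖
          = Real.sqrt (∑ i, |lamg k ω i - lam k ω i| ^ 2) := by
        rw [EuclideanSpace.norm_eq]
        simp [PiLp.sub_apply, Real.norm_eq_abs]
      have hs2 : ∑ i, |lamg k ω i - lam k ω i|
          ≤ Real.sqrt (m : ℝ) * ‖lamg k ω - lam k ω‖ := by
        have hsq := sq_sum_le_card_mul_sum_sq (s := Finset.univ)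
          (f := fun i => |lamg k ω i - lam k ω i|)
        have h6 : ∑ i, |lamg k ω i - lam k ω i|
            = Real.sqrt ((∑ i, |lamg k ω i - lam k ω i|) ^ 2) :=
          (Real.sqrt_sq (Finset.sum_nonneg fun i _ => abs_nonneg _)).symm
        rw [h6, hΔnorm, ← Real.sqrt_mul (Nat.cast_nonneg m)]
        refine Real.sqrt_le_sqrt ?_
        simpa [Finset.card_univ] using hsq
      have hs3 : ‖lamg k ω - lam k ω‖ ≤ β * ∑ i, ‖g i k ω - gf i (x k ω)‖ := by
        refine h2.trans ?_
        refine mul_le_mul_of_nonneg_left ?_ hβ.le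
        exact sqrt_sum_sq_le_sum _ _ fun i _ => norm_nonneg _
      have hs4 : Real.sqrt (m : ℝ) * (Mgrad + Lc * Θ) ≤ MS := by
        rw [hMS]
        refine mul_le_mul_of_nonneg_right ?_ hB0
        refine Real.sqrt_le_sqrt ?_
        nlinarith [Nat.cast_nonneg (α := ℝ) m]
      have hs5 : ‖∑ i, (lamg k ω i - lam k ω i) • gf i (x k ω)‖
          ≤ MS * (β * ∑ i, ‖g i k ω - gf i (x k ω)‖) := by
        refine hs1.trans ?_
        rw [← Finset.sum_mul]
        calc (∑ i, |lamg k ω i - lam k ω i|) * (Mgrad + Lc * Θ)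
            ≤ (Real.sqrt (m : ℝ) * ‖lamg k ω - lam k ω‖) * (Mgrad + Lc * Θ) :=
              mul_le_mul_of_nonneg_right hs2 hB0
          _ = (Real.sqrt (m : ℝ) * (Mgrad + Lc * Θ)) * ‖lamg k ω - lam k ω‖ := by ring
          _ ≤ MS * ‖lamg k ω - lam k ω‖ :=
              mul_le_mul_of_nonneg_right hs4 (norm_nonneg _)
          _ ≤ MS * (β * ∑ i, ‖g i k ω - gf i (x k ω)‖) :=
              mul_le_mul_of_nonneg_left hs3 hMS0
      have habs := abs_real_inner_le_norm
        (∑ i, (lamg k ω i - lam k ω i) • gf i (x k ω)) (x k ω - xstar)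
      have h7 : ‖∑ i, (lamg k ω i - lam k ω i) • gf i (x k ω)‖ * ‖x k ω - xstar‖
          ≤ (MS * (β * ∑ i, ‖g i k ω - gf i (x k ω)‖)) * Θ :=
        mul_le_mul hs5 (hdbd k ω) (norm_nonneg _)
          (mul_nonneg hMS0 (mul_nonneg hβ.le hsum_e0))
      have h8 := neg_abs_le
        ⟪∑ i, (lamg k ω i - lam k ω i) • gf i (x k ω), x k ω - xstar⟫
      linarith only [habs, h7, h8]
    rw [hdecomp, inner_add_left, inner_add_left]
    linarith only [hT1, hT2, hT3]
  -- integrability of the key inner product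
  have hGdint : ∀ k, Integrable
      (fun ω => ⟪∑ i, lamg k ω i • g i k ω, x k ω - xstar⟫) μ := by
    intro k
    refine Integrable.mono'
      ((integrable_finset_sum Finset.univ fun i _ => (hgint i k).norm).const_mul Θ)
      ((hGsmeas k).inner (hdmeas k)) ?_
    filter_upwards with ω
    have hlg := (hlamg k ω).1
    have hle1 : ∀ i, lamg k ω i ≤ 1 := by
      intro i
      have h := Finset.single_le_sum (f := fun j => lamg k ω j)
        (fun j _ => hlg.1 j) (Finset.mem_univ i)
      rw [hlg.2] at h
      exact h
    have hnorm : ‖∑ i, lamg k ω i • g i k ω‖ ≤ ∑ i, ‖g i k ω‖ := by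
      refine le_trans (norm_sum_le _ _) (Finset.sum_le_sum fun i _ => ?_)
      rw [norm_smul, Real.norm_eq_abs, abs_of_nonneg (hlg.1 i)]
      exact mul_le_of_le_one_left (norm_nonneg _) (hle1 i)
    rw [Real.norm_eq_abs]
    refine (abs_real_inner_le_norm _ _).trans ?_
    calc ‖∑ i, lamg k ω i • g i k ω‖ * ‖x k ω - xstar‖
        ≤ (∑ i, ‖g i k ω‖) * Θ :=
          mul_le_mul hnorm (hdbd k ω) (norm_nonneg _)
            (Finset.sum_nonneg fun i _ => norm_nonneg _)
      _ = Θ * ∑ i, ‖g i k ω‖ := by ring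
  -- total first-moment bound
  have hsumE : ∀ k, ∑ i, (∫ ω, ‖g i k ω - gf i (x k ω)‖ ∂μ) ≤ α k * LS := by
    intro k
    calc ∑ i, (∫ ω, ‖g i k ω - gf i (x k ω)‖ ∂μ)
        ≤ ∑ i, α k * (C i + Chat i * (Mgrad + Lc * Θ)) :=
          Finset.sum_le_sum fun i _ => hEe1 i k
      _ = α k * (M1 + (∑ i, Chat i) * (Mgrad + Lc * Θ)) := by
        rw [← Finset.mul_sum, Finset.sum_add_distrib, ← Finset.sum_mul, hM1]
      _ ≤ α k * LS := by
        refine mul_le_mul_of_nonneg_left ?_ (hαpos k).le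
        rw [hLS]
        have h1 : ∑ i, Chat i ≤ (m : ℝ) * MF := by
          have h2 := Finset.sum_le_card_nsmul Finset.univ Chat MF
            (fun i _ => hMF.2 ⟨i, rfl⟩)
          simpa [Finset.card_univ, nsmul_eq_mul] using h2
        have h3 : (∑ i, Chat i) * (Mgrad + Lc * Θ) ≤ (m : ℝ) * MF * (Mgrad + Lc * Θ) :=
          mul_le_mul_of_nonneg_right h1 hB0
        linarith only [h3]
  -- lower bound on the expectation of the key inner product
  have hIGd : ∀ k, c * (∫ ω, ‖x k ω - xstar‖ ^ 2 ∂μ) - Θ * (1 + β * MS) * (α k * LS)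
      ≤ ∫ ω, ⟪∑ i, lamg k ω i • g i k ω, x k ω - xstar⟫ ∂μ := by
    intro k
    have hint1 : Integrable (fun ω => c * ‖x k ω - xstar‖ ^ 2
        - Θ * (1 + β * MS) * (∑ i, ‖g i k ω - gf i (x k ω)‖)) μ :=
      ((haint k).const_mul c).sub
        ((integrable_finset_sum Finset.univ fun i _ => henormint i k).const_mul _)
    have h1 := integral_mono_ae hint1 (hGdint k) (hinnerlb k)
    rw [integral_sub ((haint k).const_mul c)
        ((integrable_finset_sum Finset.univ fun i _ => henormint i k).const_mul _),
      integral_const_mul, integral_const_mul,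
      integral_finset_sum _ (fun i _ => henormint i k)] at h1
    refine le_trans ?_ h1
    have h2 : Θ * (1 + β * MS) * (∑ i, ∫ ω, ‖g i k ω - gf i (x k ω)‖ ∂μ)
        ≤ Θ * (1 + β * MS) * (α k * LS) :=
      mul_le_mul_of_nonneg_left (hsumE k) hΘ'0
    linarith only [h2]
  -- pointwise bound on the squared multi-gradient norm
  have hGptw : ∀ k ω, ‖∑ i, lamg k ω i • g i k ω‖ ^ 2 ≤ ∑ i, ‖g i k ω‖ ^ 2 := by
      intro k ω
      have hlg := (hlamg k ω).1
      have hle1 : ∀ i, lamg k ω i ≤ 1 := by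
        intro i
        have h := Finset.single_le_sum (f := fun j => lamg k ω j)
          (fun j _ => hlg.1 j) (Finset.mem_univ i)
        rw [hlg.2] at h
        exact h
      have h1 : ‖∑ i, lamg k ω i • g i k ω‖ ≤ ∑ i, lamg k ω i * ‖g i k ω‖ := by
        refine le_trans (norm_sum_le _ _) (Finset.sum_le_sum fun i _ => ?_)
        rw [norm_smul, Real.norm_eq_abs, abs_of_nonneg (hlg.1 i)]
      have hcs := Finset.sum_mul_sq_le_sq_mul_sq Finset.univ
        (fun i => Real.sqrt (lamg k ω i)) (fun i => Real.sqrt (lamg k ω i) * ‖g i k ω‖)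
      have e1 : ∀ i : Fin m, Real.sqrt (lamg k ω i) * (Real.sqrt (lamg k ω i) * ‖g i k ω‖)
          = lamg k ω i * ‖g i k ω‖ := fun i => by
        rw [← mul_assoc, Real.mul_self_sqrt (hlg.1 i)]
      have e2 : ∀ i : Fin m, Real.sqrt (lamg k ω i) ^ 2 = lamg k ω i :=
        fun i => Real.sq_sqrt (hlg.1 i)
      have e3 : ∀ i : Fin m, (Real.sqrt (lamg k ω i) * ‖g i k ω‖) ^ 2
          = lamg k ω i * ‖g i k ω‖ ^ 2 := fun i => by rw [mul_pow, e2 i]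
      rw [Finset.sum_congr rfl (fun i _ => e1 i), Finset.sum_congr rfl (fun i _ => e2 i),
        Finset.sum_congr rfl (fun i _ => e3 i), hlg.2, one_mul] at hcs
      have h3 : ∑ i, lamg k ω i * ‖g i k ω‖ ^ 2 ≤ ∑ i, ‖g i k ω‖ ^ 2 :=
        Finset.sum_le_sum fun i _ => mul_le_of_le_one_left (sq_nonneg _) (hle1 i)
      have h4 : ‖∑ i, lamg k ω i • g i k ω‖ ^ 2 ≤ (∑ i, lamg k ω i * ‖g i k ω‖) ^ 2 :=
        pow_le_pow_left₀ (norm_nonneg _) h1 2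
      linarith only [hcs, h3, h4]
  have hGsqint : ∀ k, Integrable (fun ω => ‖∑ i, lamg k ω i • g i k ω‖ ^ 2) μ := by
    intro k
    refine Integrable.mono' (integrable_finset_sum Finset.univ fun i _ => hgnormsqint i k)
      ((continuous_norm.pow 2).comp_aestronglyMeasurable (hGsmeas k)) ?_
    filter_upwards with ω
    rw [Real.norm_eq_abs, abs_of_nonneg (sq_nonneg _)]
    exact hGptw k ω
  -- second moment bound for the stochastic multi-gradient
  have hG2 : ∀ k, ∫ ω, ‖∑ i, lamg k ω i • g i k ω‖ ^ 2 ∂μ ≤ Lg2 := by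
    intro k
    have hgisq : ∀ i : Fin m, ∫ ω, ‖g i k ω‖ ^ 2 ∂μ
        ≤ G i ^ 2 + (Ghat i ^ 2 + 1) * (Mgrad + Lc * Θ) ^ 2 := by
      intro i
      have hexp : (fun ω => ‖g i k ω‖ ^ 2)
          = fun ω => ‖gf i (x k ω)‖ ^ 2
            + 2 * ⟪gf i (x k ω), g i k ω - gf i (x k ω)⟫
            + ‖g i k ω - gf i (x k ω)‖ ^ 2 := by
        funext ω
        have hnas := norm_add_sq_real (gf i (x k ω)) (g i k ω - gf i (x k ω))
        have e0 : gf i (x k ω) + (g i k ω - gf i (x k ω)) = g i k ω := by abel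
        rw [e0] at hnas
        exact hnas
      have hcrossint : Integrable (fun ω => ⟪gf i (x k ω), g i k ω - gf i (x k ω)⟫) μ := by
        refine Integrable.mono' ((henormint i k).const_mul (Mgrad + Lc * Θ))
          ((hgfL2 i k).aestronglyMeasurable.inner (heint i k).aestronglyMeasurable) ?_
        filter_upwards with ω
        rw [Real.norm_eq_abs]
        exact (abs_real_inner_le_norm _ _).trans
          (mul_le_mul_of_nonneg_right (hgb i k ω) (norm_nonneg _))
      have hgfsqint : Integrable (fun ω => ‖gf i (x k ω)‖ ^ 2) μ :=
        (hgfL2 i k).norm.integrable_sq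
      have hgfsqbd : ∫ ω, ‖gf i (x k ω)‖ ^ 2 ∂μ ≤ (Mgrad + Lc * Θ) ^ 2 := by
        calc ∫ ω, ‖gf i (x k ω)‖ ^ 2 ∂μ ≤ ∫ _ω, (Mgrad + Lc * Θ) ^ 2 ∂μ :=
              integral_mono hgfsqint (integrable_const _)
                (fun ω => pow_le_pow_left₀ (norm_nonneg _) (hgb i k ω) 2)
          _ = (Mgrad + Lc * Θ) ^ 2 := by simp
      have iAB : Integrable (fun ω => ‖gf i (x k ω)‖ ^ 2
          + 2 * ⟪gf i (x k ω), g i k ω - gf i (x k ω)⟫) μ :=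
        hgfsqint.add (hcrossint.const_mul 2)
      rw [hexp, integral_add iAB (henormsqint i k),
        integral_add hgfsqint (hcrossint.const_mul 2), integral_const_mul, hcross i k,
        mul_zero, add_zero]
      have h5 := hEe2 i k
      have h6 : Ghat i ^ 2 * (Mgrad + Lc * Θ) ^ 2 + (Mgrad + Lc * Θ) ^ 2
          = (Ghat i ^ 2 + 1) * (Mgrad + Lc * Θ) ^ 2 := by ring
      linarith only [h5, hgfsqbd, h6]
    calc ∫ ω, ‖∑ i, lamg k ω i • g i k ω‖ ^ 2 ∂μ
        ≤ ∫ ω, ∑ i, ‖g i k ω‖ ^ 2 ∂μ :=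
          integral_mono (hGsqint k) (integrable_finset_sum Finset.univ fun i _ => hgnormsqint i k) (hGptw k)
      _ = ∑ i, ∫ ω, ‖g i k ω‖ ^ 2 ∂μ := integral_finset_sum _ fun i _ => hgnormsqint i k
      _ ≤ ∑ i, (G i ^ 2 + (Ghat i ^ 2 + 1) * (Mgrad + Lc * Θ) ^ 2) :=
          Finset.sum_le_sum fun i _ => hgisq i
      _ = (∑ i, G i ^ 2) + (∑ i, (Ghat i ^ 2 + 1)) * (Mgrad + Lc * Θ) ^ 2 := by
        rw [Finset.sum_add_distrib, ← Finset.sum_mul]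
      _ ≤ Lg2 := by
        rw [hLg2]
        have h1 : ∑ i, (Ghat i ^ 2 + 1) ≤ (m : ℝ) * Gmax := by
          have h2 := Finset.sum_le_card_nsmul Finset.univ (fun i => Ghat i ^ 2 + 1) Gmax
            (fun i _ => hGmax.2 ⟨i, rfl⟩)
          simpa [Finset.card_univ, nsmul_eq_mul] using h2
        have h3 : (∑ i, (Ghat i ^ 2 + 1)) * (Mgrad + Lc * Θ) ^ 2
            ≤ (m : ℝ) * Gmax * (Mgrad + Lc * Θ) ^ 2 :=
          mul_le_mul_of_nonneg_right h1 (sq_nonneg _)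
        have h4 : ∑ i, G i ^ 2 ≤ (m : ℝ) * ∑ i, G i ^ 2 :=
          le_mul_of_one_le_left hGsum0 hm1r
        have h5 : (m : ℝ) * Gmax * (Mgrad + Lc * Θ) ^ 2
            ≤ (m : ℝ) * ((m : ℝ) * Gmax) * (Mgrad + Lc * Θ) ^ 2 := by
          have h6 : 0 ≤ (m : ℝ) * Gmax * (Mgrad + Lc * Θ) ^ 2 :=
            mul_nonneg (mul_nonneg (Nat.cast_nonneg m) (by linarith only [hGmax1]))
              (sq_nonneg _)
          nlinarith [h6, hm1r]
        linarith only [h3, h4, h5]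
  -- pointwise recursion from the projection step
  have hptrec : ∀ k ω, ‖x (k + 1) ω - xstar‖ ^ 2
      ≤ ‖x k ω - xstar‖ ^ 2
        - 2 * α k * ⟪∑ i, lamg k ω i • g i k ω, x k ω - xstar⟫
        + (α k) ^ 2 * ‖∑ i, lamg k ω i • g i k ω‖ ^ 2 := by
    intro k ω
    have hproj := proj_dist_le hXcv (hupd k ω).1 hxstarX (fun w hw => (hupd k ω).2 w hw)
    have hsq : ‖x (k + 1) ω - xstar‖ ^ 2
        ≤ ‖x k ω - α k • (∑ i, lamg k ω i • g i k ω) - xstar‖ ^ 2 :=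
      pow_le_pow_left₀ (norm_nonneg _) hproj 2
    have hexp : ‖x k ω - α k • (∑ i, lamg k ω i • g i k ω) - xstar‖ ^ 2
        = ‖x k ω - xstar‖ ^ 2
          - 2 * α k * ⟪∑ i, lamg k ω i • g i k ω, x k ω - xstar⟫
          + (α k) ^ 2 * ‖∑ i, lamg k ω i • g i k ω‖ ^ 2 := by
      have e0 : x k ω - α k • (∑ i, lamg k ω i • g i k ω) - xstar
          = (x k ω - xstar) - α k • (∑ i, lamg k ω i • g i k ω) := by abel
      rw [e0, norm_sub_sq_real, real_inner_smul_right, norm_smul, Real.norm_eq_abs,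
        mul_pow, sq_abs, real_inner_comm]
      ring
    linarith only [hsq, hexp]
  -- recursion in expectation
  have hrecD : ∀ k : ℕ, 1 ≤ k → (∫ ω, ‖x (k + 1) ω - xstar‖ ^ 2 ∂μ)
      ≤ (1 - 2 * c * γ / (k : ℝ)) * (∫ ω, ‖x k ω - xstar‖ ^ 2 ∂μ)
        + (γ / (k : ℝ)) ^ 2 * Mbar := by
    intro k hk
    have hα : α k = γ / (k : ℝ) := hstep k hk
    have iB : Integrable (fun ω =>
        2 * α k * ⟪∑ i, lamg k ω i • g i k ω, x k ω - xstar⟫) μ :=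
      (hGdint k).const_mul (2 * α k)
    have iC : Integrable (fun ω => (α k) ^ 2 * ‖∑ i, lamg k ω i • g i k ω‖ ^ 2) μ :=
      (hGsqint k).const_mul ((α k) ^ 2)
    have iA : Integrable (fun ω => ‖x k ω - xstar‖ ^ 2
        - 2 * α k * ⟪∑ i, lamg k ω i • g i k ω, x k ω - xstar⟫) μ := (haint k).sub iB
    have hint2 : Integrable (fun ω => ‖x k ω - xstar‖ ^ 2
        - 2 * α k * ⟪∑ i, lamg k ω i • g i k ω, x k ω - xstar⟫
        + (α k) ^ 2 * ‖∑ i, lamg k ω i • g i k ω‖ ^ 2) μ := iA.add iC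
    have h1 : (∫ ω, ‖x (k + 1) ω - xstar‖ ^ 2 ∂μ)
        ≤ ∫ ω, (‖x k ω - xstar‖ ^ 2
          - 2 * α k * ⟪∑ i, lamg k ω i • g i k ω, x k ω - xstar⟫
          + (α k) ^ 2 * ‖∑ i, lamg k ω i • g i k ω‖ ^ 2) ∂μ :=
      integral_mono (haint (k + 1)) hint2 (fun ω => hptrec k ω)
    rw [integral_add iA iC, integral_sub (haint k) iB,
      integral_const_mul, integral_const_mul] at h1
    have h2 := hIGd k
    have h3 := hG2 k
    have hα0 : 0 < α k := hαpos k
    have e5 : 2 * α k * (c * (∫ ω, ‖x k ω - xstar‖ ^ 2 ∂μ)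
          - Θ * (1 + β * MS) * (α k * LS))
        ≤ 2 * α k * ∫ ω, ⟪∑ i, lamg k ω i • g i k ω, x k ω - xstar⟫ ∂μ :=
      mul_le_mul_of_nonneg_left h2 (by positivity)
    have e6 : (α k) ^ 2 * (∫ ω, ‖∑ i, lamg k ω i • g i k ω‖ ^ 2 ∂μ)
        ≤ (α k) ^ 2 * Lg2 := mul_le_mul_of_nonneg_left h3 (sq_nonneg _)
    have e7 : Mbar = Lg2 + 2 * (Θ * (1 + β * MS)) * LS := by rw [hMbar]; ring
    have h4 : (∫ ω, ‖x (k + 1) ω - xstar‖ ^ 2 ∂μ)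
        ≤ (1 - 2 * c * α k) * (∫ ω, ‖x k ω - xstar‖ ^ 2 ∂μ) + (α k) ^ 2 * Mbar := by
      rw [e7]
      nlinarith [h1, e5, e6]
    rw [hα] at h4
    have e8 : (1 - 2 * c * (γ / (k : ℝ))) * (∫ ω, ‖x k ω - xstar‖ ^ 2 ∂μ)
        = (1 - 2 * c * γ / (k : ℝ)) * (∫ ω, ‖x k ω - xstar‖ ^ 2 ∂μ) := by
      ring
    rw [e8] at h4
    exact h4
  -- base case
  have hden : (0:ℝ) < 2 * c * γ - 1 := by linarith only [ht1]
  have hD1 : (∫ ω, ‖x 1 ω - xstar‖ ^ 2 ∂μ) ≤ 2 * γ ^ 2 * Mbar * (2 * c * γ - 1)⁻¹ := by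
    have h1 : ∀ ω, ‖x 1 ω - xstar‖ ^ 2 ≤ ((Mgrad + Lc * Θ) / c) ^ 2 := fun ω =>
      pow_le_pow_left₀ (norm_nonneg _) (hdist _ (hxX 1 ω)) 2
    have h2 : (∫ ω, ‖x 1 ω - xstar‖ ^ 2 ∂μ) ≤ ((Mgrad + Lc * Θ) / c) ^ 2 := by
      calc (∫ ω, ‖x 1 ω - xstar‖ ^ 2 ∂μ) ≤ ∫ _ω, ((Mgrad + Lc * Θ) / c) ^ 2 ∂μ :=
            integral_mono (haint 1) (integrable_const _) h1
        _ = ((Mgrad + Lc * Θ) / c) ^ 2 := by simp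
    refine h2.trans ?_
    have hBM : (Mgrad + Lc * Θ) ^ 2 ≤ Mbar := hLg2B.trans hMbarLg2
    rw [div_pow, ← div_eq_mul_inv, div_le_div_iff₀ (by positivity) hden]
    have hq : 2 * c * γ - 1 ≤ 2 * c ^ 2 * γ ^ 2 := by
      nlinarith [sq_nonneg (c * γ - 1), ht1]
    have p1 : (Mgrad + Lc * Θ) ^ 2 * (2 * c * γ - 1) ≤ Mbar * (2 * c * γ - 1) :=
      mul_le_mul_of_nonneg_right hBM hden.le
    have p2 : Mbar * (2 * c * γ - 1) ≤ Mbar * (2 * c ^ 2 * γ ^ 2) :=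
      mul_le_mul_of_nonneg_left hq hMbar0
    linarith only [p1, p2]
  -- apply the rate lemma
  have hν0 : 0 ≤ max (2 * γ ^ 2 * Mbar * (2 * c * γ - 1)⁻¹) (‖x0 - xstar‖ ^ 2) :=
    le_trans (sq_nonneg _) (le_max_right _ _)
  have hAν : 2 * γ ^ 2 * Mbar
      ≤ (2 * c * γ - 1) * max (2 * γ ^ 2 * Mbar * (2 * c * γ - 1)⁻¹) (‖x0 - xstar‖ ^ 2) := by
    have h1 : 2 * γ ^ 2 * Mbar * (2 * c * γ - 1)⁻¹
        ≤ max (2 * γ ^ 2 * Mbar * (2 * c * γ - 1)⁻¹) (‖x0 - xstar‖ ^ 2) := le_max_left _ _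
    have h2 := mul_le_mul_of_nonneg_left h1 hden.le
    have e : (2 * c * γ - 1) * (2 * γ ^ 2 * Mbar * (2 * c * γ - 1)⁻¹) = 2 * γ ^ 2 * Mbar := by
      field_simp
    linarith only [h2, e]
  have hDk := seq_rate (D := fun k => ∫ ω, ‖x k ω - xstar‖ ^ 2 ∂μ)
    (ν := max (2 * γ ^ 2 * Mbar * (2 * c * γ - 1)⁻¹) (‖x0 - xstar‖ ^ 2))
    hMbar0 hν0 ht1 ht2 hAν
    (fun k => integral_nonneg fun ω => sq_nonneg _)
    (hD1.trans (le_max_left _ _)) hrecD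
  -- conclusion
  intro k hk
  have hDle := hDk k hk
  have hSint : Integrable (fun ω => ∑ i, lamstar i * f i (x k ω)) μ := by
    refine Integrable.mono' (integrable_const ((∑ i, lamstar i * |f i xstar|)
        + ((Mgrad + Lc * Θ) * Θ + Lc / 2 * Θ ^ 2)))
      (Finset.aestronglyMeasurable_fun_sum Finset.univ fun i _ =>
        aestronglyMeasurable_const.mul ((hfc i).comp_aestronglyMeasurable (hxaem k))) ?_
    filter_upwards with ω
    rw [Real.norm_eq_abs]
    exact hfabs _ (hxX k ω)
  have hup2 : (∫ ω, ∑ i, lamstar i * f i (x k ω) ∂μ)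
      ≤ (∑ i, lamstar i * f i xstar) + Lc / 2 * ∫ ω, ‖x k ω - xstar‖ ^ 2 ∂μ := by
    have h2 : Integrable (fun ω => (∑ i, lamstar i * f i xstar)
        + Lc / 2 * ‖x k ω - xstar‖ ^ 2) μ :=
      (integrable_const _).add ((haint k).const_mul _)
    have h3 := integral_mono hSint h2 (fun ω => hupper (x k ω))
    rw [integral_add (integrable_const _) ((haint k).const_mul _),
      integral_const, integral_const_mul] at h3
    simpa using h3
  have h4 : Lc / 2 * (∫ ω, ‖x k ω - xstar‖ ^ 2 ∂μ)
      ≤ Lc / 2 * (max (2 * γ ^ 2 * Mbar * (2 * c * γ - 1)⁻¹) (‖x0 - xstar‖ ^ 2) / (k : ℝ)) :=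
    mul_le_mul_of_nonneg_left hDle (by positivity)
  linarith only [hup2, h4]
end

section
/- Let v_1, …, v_m ∈ ℝ^n, let λ_* ∈ Δ^m be a minimizer of λ ↦ ‖Σ_{i=1}^m λ_i v_i‖² over Δ^m, and set p = Σ_{i=1}^m (λ_*)_i v_i (the minimal-norm element of conv{v_1, …, v_m}). Then d_* = −p is a minimizer of the function φ(d) = max_{1≤i≤m} ⟨v_i, d⟩ + (1/2)‖d‖² over d ∈ ℝ^n, and the minimum value is φ(d_*) = −(1/2)‖p‖². -/
open scoped RealInnerProductSpace BigOperators

/-- Duality between the steepest common descent subproblem and the minimum-norm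
subproblem: if `λ_*` minimizes `‖Σᵢ λᵢ vᵢ‖²` over the simplex and
`p = Σᵢ (λ_*)ᵢ vᵢ`, then `d_* = −p` minimizes
`φ(d) = maxᵢ ⟪vᵢ, d⟫ + ½‖d‖²` and `φ(d_*) = −½‖p‖²`. -/
theorem stmt5 {n m : ℕ} (hm : 0 < m) (v : Fin m → EuclideanSpace ℝ (Fin n))
    (lamstar : Fin m → ℝ) (hmem : lamstar ∈ stdSimplex ℝ (Fin m))
    (hmin : ∀ lam ∈ stdSimplex ℝ (Fin m),
      ‖∑ i, lamstar i • v i‖ ^ 2 ≤ ‖∑ i, lam i • v i‖ ^ 2)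
    (p : EuclideanSpace ℝ (Fin n)) (hp : p = ∑ i, lamstar i • v i) :
    (∀ d : EuclideanSpace ℝ (Fin n),
        (Finset.univ.sup' ⟨⟨0, hm⟩, Finset.mem_univ _⟩ fun i => ⟪v i, -p⟫) + 1 / 2 * ‖-p‖ ^ 2 ≤
        (Finset.univ.sup' ⟨⟨0, hm⟩, Finset.mem_univ _⟩ fun i => ⟪v i, d⟫) + 1 / 2 * ‖d‖ ^ 2) ∧
    (Finset.univ.sup' ⟨⟨0, hm⟩, Finset.mem_univ _⟩ fun i => ⟪v i, -p⟫) + 1 / 2 * ‖-p‖ ^ 2 =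
      -(1 / 2) * ‖p‖ ^ 2 := by
  obtain ⟨hnn, hsum⟩ := hmem
  -- key: ∀ i, ‖p‖^2 ≤ ⟪v i, p⟫
  have hkey : ∀ i, ‖p‖ ^ 2 ≤ ⟪v i, p⟫ := by
    intro i
    have hstep : ∀ t : ℝ, 0 < t → t ≤ 1 →
        ‖p‖ ^ 2 ≤ ‖p + t • (v i - p)‖ ^ 2 := by
      intro t ht ht1
      set lam' : Fin m → ℝ := fun j => (1 - t) * lamstar j + t * (if j = i then 1 else 0)
      have hmem' : lam' ∈ stdSimplex ℝ (Fin m) := by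
        constructor
        · intro j
          have := hnn j
          have h1t : (0:ℝ) ≤ 1 - t := by linarith
          dsimp [lam']
          split_ifs <;> nlinarith
        · simp [lam', Finset.sum_add_distrib, ← Finset.mul_sum, hsum]
      have hsum' : ∑ j, lam' j • v j = p + t • (v i - p) := by
        have : ∑ j, lam' j • v j = (1 - t) • ∑ j, lamstar j • v j + t • v i := by
          simp [lam', add_smul, mul_smul, Finset.sum_add_distrib, ← Finset.smul_sum,
            ite_smul, Finset.sum_ite_eq']
        rw [this, ← hp]
        module
      have := hmin lam' hmem'
      rw [hsum', ← hp] at this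
      exact this
    by_contra hlt
    push_neg at hlt
    set c : ℝ := ⟪p, v i - p⟫ with hc
    have hcneg : c < 0 := by
      have h1 : ⟪v i, p⟫ = c + ‖p‖ ^ 2 := by
        rw [hc, inner_sub_right, real_inner_self_eq_norm_sq, real_inner_comm p (v i)]
        ring
      linarith
    have hineq : ∀ t : ℝ, 0 < t → t ≤ 1 → 0 ≤ 2 * c + t * ‖v i - p‖ ^ 2 := by
      intro t ht ht1
      have h := hstep t ht ht1
      have hexp : ‖p + t • (v i - p)‖ ^ 2
          = ‖p‖ ^ 2 + 2 * (t * c) + t ^ 2 * ‖v i - p‖ ^ 2 := by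
        rw [norm_add_sq_real, real_inner_smul_right, norm_smul, mul_pow]
        simp [abs_of_pos ht, hc]
      rw [hexp] at h
      nlinarith
    rcases eq_or_lt_of_le (sq_nonneg ‖v i - p‖) with hz | hpos
    · have := hineq 1 one_pos le_rfl
      nlinarith
    · set t0 : ℝ := min 1 (-c / ‖v i - p‖ ^ 2)
      have ht0pos : 0 < t0 := lt_min one_pos (div_pos (by linarith) hpos)
      have ht0le : t0 ≤ 1 := min_le_left _ _
      have := hineq t0 ht0pos ht0le
      have h2 : t0 * ‖v i - p‖ ^ 2 ≤ -c := by
        have : t0 ≤ -c / ‖v i - p‖ ^ 2 := min_le_right _ _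
        calc t0 * ‖v i - p‖ ^ 2 ≤ (-c / ‖v i - p‖ ^ 2) * ‖v i - p‖ ^ 2 := by
              exact mul_le_mul_of_nonneg_right this (le_of_lt hpos)
          _ = -c := div_mul_cancel₀ _ hpos.ne'
      linarith
  have hpd : ∀ d : EuclideanSpace ℝ (Fin n), ⟪p, d⟫ = ∑ i, lamstar i * ⟪v i, d⟫ := by
    intro d
    rw [hp, sum_inner]
    exact Finset.sum_congr rfl fun i _ => real_inner_smul_left _ _ _
  have hne : (Finset.univ : Finset (Fin m)).Nonempty := ⟨⟨0, hm⟩, Finset.mem_univ _⟩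
  -- sup as weighted-average lower bound
  have hsuplb : ∀ d : EuclideanSpace ℝ (Fin n),
      ⟪p, d⟫ ≤ Finset.univ.sup' ⟨⟨0, hm⟩, Finset.mem_univ _⟩ fun i => ⟪v i, d⟫ := by
    intro d
    rw [hpd d]
    calc ∑ i, lamstar i * ⟪v i, d⟫
        ≤ ∑ i, lamstar i * (Finset.univ.sup' ⟨⟨0, hm⟩, Finset.mem_univ _⟩ fun i => ⟪v i, d⟫) := by
          apply Finset.sum_le_sum
          intro i _
          exact mul_le_mul_of_nonneg_left (Finset.le_sup' (fun i => ⟪v i, d⟫) (Finset.mem_univ i)) (hnn i)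
      _ = _ := by rw [← Finset.sum_mul, hsum, one_mul]
  have hsupeq : (Finset.univ.sup' ⟨⟨0, hm⟩, Finset.mem_univ _⟩ fun i => ⟪v i, -p⟫)
      = -‖p‖ ^ 2 := by
    apply le_antisymm
    · apply Finset.sup'_le
      intro i _
      rw [inner_neg_right]
      linarith [hkey i]
    · have := hsuplb (-p)
      rwa [inner_neg_right, real_inner_self_eq_norm_sq] at this
  constructor
  · intro d
    have h1 : ⟪p, d⟫ + 1 / 2 * ‖d‖ ^ 2 ≥ -(1/2) * ‖p‖ ^ 2 := by
      have h0 : (0:ℝ) ≤ ‖p + d‖ ^ 2 := sq_nonneg _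
      rw [norm_add_sq_real] at h0
      linarith
    have h2 := hsuplb d
    rw [hsupeq, norm_neg]
    linarith
  · rw [hsupeq, norm_neg]
    ring
end

section
/- Let (Ω, F, μ) be a probability space, let v_1, …, v_m ∈ ℝ^n, let g_1, …, g_m : Ω → ℝ^n be integrable random vectors satisfying E[‖g_i − v_i‖] ≤ α (C_i + Ĉ_i ‖v_i‖) for constants α > 0, C_i > 0, Ĉ_i > 0, and let λ^g : Ω → Δ^m be a measurable map. Define the random vector g = Σ_{i=1}^m (λ^g)_i g_i. Then ‖E[g − Σ_{i=1}^m (λ^g)_i v_i]‖ ≤ α (M_1 + M_F Σ_{i=1}^m ‖v_i‖), where M_1 = Σ_{i=1}^m C_i and M_F = max_{1≤i≤m} Ĉ_i. -/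
open MeasureTheory
open scoped RealInnerProductSpace BigOperators

/-- Bound on the biasedness of the stochastic multi-gradient: if
`E[‖gᵢ − vᵢ‖] ≤ α(Cᵢ + Ĉᵢ‖vᵢ‖)` and `λᵍ` takes values in the simplex, then the random vector
`g = Σᵢ (λᵍ)ᵢ gᵢ` satisfies `‖E[g − Σᵢ (λᵍ)ᵢ vᵢ]‖ ≤ α(M₁ + M_F Σᵢ ‖vᵢ‖)` with
`M₁ = Σᵢ Cᵢ` and `M_F = maxᵢ Ĉᵢ`. -/
theorem stmt10 {n m : ℕ} {Ω : Type*} [MeasurableSpace Ω]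
    (μ : Measure Ω) [IsProbabilityMeasure μ]
    (v : Fin m → EuclideanSpace ℝ (Fin n))
    (g : Fin m → Ω → EuclideanSpace ℝ (Fin n))
    (hgint : ∀ i, Integrable (g i) μ)
    (α : ℝ) (hα : 0 < α)
    (C Chat : Fin m → ℝ) (hC : ∀ i, 0 < C i) (hChat : ∀ i, 0 < Chat i)
    (hb : ∀ i, ∫ ω, ‖g i ω - v i‖ ∂μ ≤ α * (C i + Chat i * ‖v i‖))
    (lamg : Ω → Fin m → ℝ) (hlamg_meas : Measurable lamg)
    (hlamg : ∀ ω, lamg ω ∈ stdSimplex ℝ (Fin m))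
    (MF : ℝ) (hMF : IsGreatest (Set.range Chat) MF) :
    ‖∫ ω, ((∑ i, lamg ω i • g i ω) - ∑ i, lamg ω i • v i) ∂μ‖ ≤
      α * ((∑ i, C i) + MF * ∑ i, ‖v i‖) := by
  -- bounds on λ
  have hl0 : ∀ ω i, 0 ≤ lamg ω i := fun ω i => (hlamg ω).1 i
  have hl1 : ∀ ω i, lamg ω i ≤ 1 := by
    intro ω i
    have h := (hlamg ω).2
    calc lamg ω i ≤ ∑ j, lamg ω j :=
          Finset.single_le_sum (fun j _ => hl0 ω j) (Finset.mem_univ i)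
      _ = 1 := h
  -- rewrite integrand
  have hrw : ∀ ω, ((∑ i, lamg ω i • g i ω) - ∑ i, lamg ω i • v i)
      = ∑ i, lamg ω i • (g i ω - v i) := by
    intro ω
    rw [← Finset.sum_sub_distrib]
    exact Finset.sum_congr rfl fun i _ => (smul_sub _ _ _).symm
  -- integrability of ‖g i - v i‖
  have hgvint : ∀ i, Integrable (fun ω => g i ω - v i) μ :=
    fun i => (hgint i).sub (integrable_const _)
  have hnint : ∀ i : Fin m, Integrable (fun ω => ‖g i ω - v i‖) μ :=
    fun i => (hgvint i).norm
  have hHint : Integrable (fun ω => ∑ i, ‖g i ω - v i‖) μ :=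
    integrable_finset_sum _ fun i _ => hnint i
  -- pointwise norm bound
  have hpt : ∀ ω, ‖∑ i, lamg ω i • (g i ω - v i)‖ ≤ ∑ i, ‖g i ω - v i‖ := by
    intro ω
    calc ‖∑ i, lamg ω i • (g i ω - v i)‖ ≤ ∑ i, ‖lamg ω i • (g i ω - v i)‖ :=
          norm_sum_le _ _
      _ ≤ ∑ i, ‖g i ω - v i‖ := by
          refine Finset.sum_le_sum fun i _ => ?_
          rw [norm_smul, Real.norm_eq_abs, abs_of_nonneg (hl0 ω i)]
          exact mul_le_of_le_one_left (norm_nonneg _) (hl1 ω i)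
  -- measurability of integrand
  have hmeas : AEStronglyMeasurable
      (fun ω => ∑ i, lamg ω i • (g i ω - v i)) μ := by
    refine Finset.aestronglyMeasurable_fun_sum _ fun i _ => ?_
    exact ((measurable_pi_apply i).comp hlamg_meas).aestronglyMeasurable.smul
      (hgvint i).aestronglyMeasurable
  have hfint : Integrable (fun ω => ∑ i, lamg ω i • (g i ω - v i)) μ :=
    Integrable.mono' hHint hmeas (Filter.Eventually.of_forall fun ω => hpt ω)
  have h1 : ‖∫ ω, ((∑ i, lamg ω i • g i ω) - ∑ i, lamg ω i • v i) ∂μ‖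
      ≤ ∫ ω, ∑ i, ‖g i ω - v i‖ ∂μ := by
    simp_rw [hrw]
    calc ‖∫ ω, ∑ i, lamg ω i • (g i ω - v i) ∂μ‖
        ≤ ∫ ω, ‖∑ i, lamg ω i • (g i ω - v i)‖ ∂μ := norm_integral_le_integral_norm _
      _ ≤ ∫ ω, ∑ i, ‖g i ω - v i‖ ∂μ :=
          integral_mono hfint.norm hHint hpt
  have h2 : (∫ ω, ∑ i, ‖g i ω - v i‖ ∂μ) ≤ ∑ i, α * (C i + Chat i * ‖v i‖) := by
    rw [integral_finset_sum _ fun i _ => hnint i]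
    exact Finset.sum_le_sum fun i _ => hb i
  have h3 : ∑ i, α * (C i + Chat i * ‖v i‖) ≤ α * ((∑ i, C i) + MF * ∑ i, ‖v i‖) := by
    rw [← Finset.mul_sum]
    refine mul_le_mul_of_nonneg_left ?_ hα.le
    rw [Finset.sum_add_distrib, Finset.mul_sum]
    refine add_le_add le_rfl (Finset.sum_le_sum fun i _ => ?_)
    exact mul_le_mul_of_nonneg_right (hMF.2 ⟨i, rfl⟩) (norm_nonneg _)
  linarith
end

section
/- Under the SMG setting with assumption (b) and the subproblem Lipschitz assumption, for every k one has E_{w_k}[‖λ^g_k − λ_k‖] ≤ α_k β L_{∇S}, and consequently E_{w_k}[‖∇_x S(x_k, λ^g_k) − ∇_x S(x_k, λ_k)‖] ≤ α_k β L_{∇S} M_S. -/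
open MeasureTheory
open scoped RealInnerProductSpace BigOperators

lemma aux_sqrt_sum_le {m : ℕ} (a : Fin m → ℝ) (ha : ∀ i, 0 ≤ a i) :
    Real.sqrt (∑ i, a i ^ 2) ≤ ∑ i, a i := by
  rw [show (∑ i, a i) = Real.sqrt ((∑ i, a i) ^ 2) from
    (Real.sqrt_sq (Finset.sum_nonneg fun i _ => ha i)).symm]
  exact Real.sqrt_le_sqrt (Finset.sum_sq_le_sq_sum_of_nonneg fun i _ => ha i)

lemma aux_sum_abs_le {m : ℕ} (e : EuclideanSpace ℝ (Fin m)) :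
    ∑ i, |e i| ≤ Real.sqrt m * ‖e‖ := by
  have h1 : (∑ i, |e i|) ^ 2 ≤ (m : ℝ) * ∑ i, |e i| ^ 2 := by
    simpa using sq_sum_le_card_mul_sum_sq (s := Finset.univ) (f := fun i => |e i|)
  calc ∑ i, |e i| = Real.sqrt ((∑ i, |e i|) ^ 2) :=
        (Real.sqrt_sq (Finset.sum_nonneg fun i _ => abs_nonneg _)).symm
    _ ≤ Real.sqrt ((m : ℝ) * ∑ i, |e i| ^ 2) := Real.sqrt_le_sqrt h1
    _ = Real.sqrt m * Real.sqrt (∑ i, |e i| ^ 2) := Real.sqrt_mul (by positivity) _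
    _ = Real.sqrt m * ‖e‖ := by rw [EuclideanSpace.norm_eq]; simp [Real.norm_eq_abs]

lemma aux_simplex_norm_le_one {m : ℕ} (y : EuclideanSpace ℝ (Fin m))
    (hy : y.ofLp ∈ stdSimplex ℝ (Fin m)) : ‖y‖ ≤ 1 := by
  have h0 : ∀ i, 0 ≤ y i := hy.1
  have h1 : ∑ i, y i = 1 := hy.2
  have hle : ∀ i, y i ≤ 1 := fun i =>
    h1 ▸ Finset.single_le_sum (fun j _ => h0 j) (Finset.mem_univ i)
  rw [EuclideanSpace.norm_eq]
  have hsum : ∑ i, ‖y i‖ ^ 2 ≤ 1 := by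
    calc ∑ i, ‖y i‖ ^ 2 = ∑ i, (y i) ^ 2 := by simp [Real.norm_eq_abs, sq_abs]
      _ ≤ ∑ i, y i := Finset.sum_le_sum fun i _ => by nlinarith [h0 i, hle i]
      _ = 1 := h1
  calc Real.sqrt (∑ i, ‖y i‖ ^ 2) ≤ Real.sqrt 1 := Real.sqrt_le_sqrt hsum
    _ = 1 := Real.sqrt_one

lemma aux_simplex_comb_norm_le {m n : ℕ} (y : EuclideanSpace ℝ (Fin m))
    (hy : y.ofLp ∈ stdSimplex ℝ (Fin m)) (v : Fin m → EuclideanSpace ℝ (Fin n)) (B : ℝ)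
    (hv : ∀ i, ‖v i‖ ≤ B) : ‖∑ i, y i • v i‖ ≤ B := by
  calc ‖∑ i, y i • v i‖ ≤ ∑ i, ‖y i • v i‖ := norm_sum_le _ _
    _ = ∑ i, y i * ‖v i‖ := by
        refine Finset.sum_congr rfl fun i _ => ?_
        rw [norm_smul, Real.norm_eq_abs, abs_of_nonneg (hy.1 i)]
    _ ≤ ∑ i, y i * B := Finset.sum_le_sum fun i _ =>
        mul_le_mul_of_nonneg_left (hv i) (hy.1 i)
    _ = B := by rw [← Finset.sum_mul, hy.2, one_mul]

set_option maxHeartbeats 1000000 in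
/-- Bounds (5.7)–(5.8): under assumption (b) and the subproblem Lipschitz assumption,
`E_{w_k}[‖λᵍ_k − λ_k‖] ≤ α_k βL_{∇S}` and
`E_{w_k}[‖∇ₓS(x_k,λᵍ_k) − ∇ₓS(x_k,λ_k)‖] ≤ α_k βL_{∇S}M_S`. -/
theorem stmt13 {n m : ℕ} {Ω : Type*} {mΩ : MeasurableSpace Ω}
    (μ : Measure Ω) [IsProbabilityMeasure μ]
    -- the feasible region
    (X : Set (EuclideanSpace ℝ (Fin n))) (hXne : X.Nonempty) (hXcl : IsClosed X)
    (hXcv : Convex ℝ X) (Θ : ℝ) (hdiam : ∀ x ∈ X, ∀ y ∈ X, ‖x - y‖ ≤ Θ)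
    -- the objective functions and their gradients
    (f : Fin m → EuclideanSpace ℝ (Fin n) → ℝ)
    (gf : Fin m → EuclideanSpace ℝ (Fin n) → EuclideanSpace ℝ (Fin n))
    (hgrad : ∀ i x, HasGradientAt (f i) (gf i x) x)
    (L : Fin m → ℝ) (hLpos : ∀ i, 0 < L i)
    (hLip : ∀ i (x y : EuclideanSpace ℝ (Fin n)), ‖gf i x - gf i y‖ ≤ L i * ‖x - y‖)
    (Lc : ℝ) (hLc : IsGreatest (Set.range L) Lc)
    (Mgrad : ℝ) (hgfbd : ∀ i, ∀ x ∈ X, ‖gf i x‖ ≤ Mgrad + Lc * Θ)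
    -- the σ-algebras generated by the information up to iteration k
    (𝒢 : ℕ → MeasurableSpace Ω) (h𝒢 : ∀ k, 𝒢 k ≤ mΩ)
    -- stepsizes
    (α : ℕ → ℝ) (hαpos : ∀ k, 0 < α k)
    -- iterates, stochastic gradients and subproblem solutions
    (x : ℕ → Ω → EuclideanSpace ℝ (Fin n))
    (hxmeas : ∀ k, StronglyMeasurable[𝒢 k] (x k))
    (hxX : ∀ k ω, x k ω ∈ X)
    (g : Fin m → ℕ → Ω → EuclideanSpace ℝ (Fin n))
    (hgint : ∀ i k, Integrable (g i k) μ)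
    (lamg lam : ℕ → Ω → EuclideanSpace ℝ (Fin m))
    (hlamg_meas : ∀ k, Measurable (lamg k))
    (hlam_meas : ∀ k, StronglyMeasurable[𝒢 k] (lam k))
    (hlamg : ∀ k ω, (lamg k ω).ofLp ∈ stdSimplex ℝ (Fin m) ∧
      ∀ z ∈ stdSimplex ℝ (Fin m),
        ‖∑ i, lamg k ω i • g i k ω‖ ^ 2 ≤ ‖∑ i, z i • g i k ω‖ ^ 2)
    (hlam : ∀ k ω, (lam k ω).ofLp ∈ stdSimplex ℝ (Fin m) ∧
      ∀ z ∈ stdSimplex ℝ (Fin m),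
        ‖∑ i, lam k ω i • gf i (x k ω)‖ ^ 2 ≤ ‖∑ i, z i • gf i (x k ω)‖ ^ 2)
    -- assumption (b): bound on the first moment
    (C Chat : Fin m → ℝ) (hC : ∀ i, 0 < C i) (hChat : ∀ i, 0 < Chat i)
    (hb : ∀ i k, ∀ᵐ ω ∂μ,
      (μ[fun ω' => ‖g i k ω' - gf i (x k ω')‖ | 𝒢 k]) ω ≤
        α k * (C i + Chat i * ‖gf i (x k ω)‖))
    -- subproblem Lipschitz continuity
    (β : ℝ) (hβ : 0 < β)
    (hsub : ∀ k, ∀ᵐ ω ∂μ,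
      ‖lamg k ω - lam k ω‖ ≤ β * Real.sqrt (∑ i, ‖g i k ω - gf i (x k ω)‖ ^ 2))
    -- the constants
    (M1 MF LS MS : ℝ)
    (hM1 : M1 = ∑ i, C i) (hMF : IsGreatest (Set.range Chat) MF)
    (hLS : LS = M1 + (m : ℝ) * MF * (Mgrad + Lc * Θ))
    (hMS : MS = Real.sqrt ((m : ℝ) * (n : ℝ)) * (Mgrad + Lc * Θ)) :
    ∀ k : ℕ,
      (∀ᵐ ω ∂μ, (μ[fun ω' => ‖lamg k ω' - lam k ω'‖ | 𝒢 k]) ω ≤ α k * (β * LS)) ∧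
      (∀ᵐ ω ∂μ,
        (μ[fun ω' => ‖(∑ i, lamg k ω' i • gf i (x k ω')) -
            ∑ i, lam k ω' i • gf i (x k ω')‖ | 𝒢 k]) ω ≤ α k * (β * LS * MS)) := by
  intro k
  set B : ℝ := Mgrad + Lc * Θ with hBdef
  obtain ⟨i₀, hi₀⟩ := hMF.1
  have hMFpos : 0 < MF := hi₀ ▸ hChat i₀
  have hBnn : 0 ≤ B := by
    obtain ⟨x₀, hx₀⟩ := hXne
    exact le_trans (norm_nonneg _) (hgfbd i₀ x₀ hx₀)
  have hChatle : ∀ i, Chat i ≤ MF := fun i => hMF.2 ⟨i, rfl⟩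
  -- measurability preliminaries
  have hxm : StronglyMeasurable (x k) := (hxmeas k).mono (h𝒢 k)
  have hgfc : ∀ i, Continuous (gf i) := by
    intro i
    have : LipschitzWith ⟨L i, (hLpos i).le⟩ (gf i) :=
      LipschitzWith.of_dist_le_mul fun a b => by
        rw [dist_eq_norm, dist_eq_norm]; exact hLip i a b
    exact this.continuous
  have hgfx_sm : ∀ i, StronglyMeasurable fun ω => gf i (x k ω) :=
    fun i => (hgfc i).comp_stronglyMeasurable hxm
  have hgfx_bd : ∀ i ω, ‖gf i (x k ω)‖ ≤ B := fun i ω => hgfbd i _ (hxX k ω)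
  have hgfx_int : ∀ i, Integrable (fun ω => gf i (x k ω)) μ := fun i =>
    Integrable.mono' (integrable_const B) (hgfx_sm i).aestronglyMeasurable
      (Filter.Eventually.of_forall fun ω => hgfx_bd i ω)
  set d : Fin m → Ω → ℝ := fun i ω => ‖g i k ω - gf i (x k ω)‖ with hddef
  have hdint : ∀ i, Integrable (d i) μ := fun i =>
    ((hgint i k).sub (hgfx_int i)).norm
  -- integrability of ‖lamg - lam‖
  have hlamg_sm : StronglyMeasurable (lamg k) := (hlamg_meas k).stronglyMeasurable
  have hlam_sm : StronglyMeasurable (lam k) := (hlam_meas k).mono (h𝒢 k)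
  have hfnorm_sm : StronglyMeasurable fun ω => ‖lamg k ω - lam k ω‖ :=
    (hlamg_sm.sub hlam_sm).norm
  have hfint : Integrable (fun ω => ‖lamg k ω - lam k ω‖) μ := by
    refine Integrable.mono' (integrable_const 2) hfnorm_sm.aestronglyMeasurable
      (Filter.Eventually.of_forall fun ω => ?_)
    rw [Real.norm_eq_abs, abs_of_nonneg (norm_nonneg _)]
    calc ‖lamg k ω - lam k ω‖ ≤ ‖lamg k ω‖ + ‖lam k ω‖ := norm_sub_le _ _
      _ ≤ 1 + 1 := add_le_add
          (aux_simplex_norm_le_one _ (hlamg k ω).1)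
          (aux_simplex_norm_le_one _ (hlam k ω).1)
      _ = 2 := by norm_num
  -- part 1
  have hsumd_int : ∀ i ∈ Finset.univ, Integrable (d i) μ := fun i _ => hdint i
  have hGint : Integrable (β • ∑ i, d i) μ := by
    rw [Finset.sum_fn]
    exact (integrable_finset_sum Finset.univ hsumd_int).smul β
  have hptwise : (fun ω => ‖lamg k ω - lam k ω‖) ≤ᵐ[μ] (β • ∑ i, d i) := by
    filter_upwards [hsub k] with ω hω
    simp only [Pi.smul_apply, Finset.sum_apply, smul_eq_mul]
    refine hω.trans ?_
    exact mul_le_mul_of_nonneg_left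
      (aux_sqrt_sum_le (fun i => d i ω) fun i => norm_nonneg _) hβ.le
  have hcond := condExp_mono (m := 𝒢 k) hfint hGint hptwise
  have hsmul := condExp_smul (μ := μ) (m := 𝒢 k) β (∑ i, d i)
  have hsum := condExp_finsetSum (μ := μ) (m := 𝒢 k) hsumd_int
  have hballs : ∀ᵐ ω ∂μ, ∀ i, (μ[d i | 𝒢 k]) ω ≤
      α k * (C i + Chat i * ‖gf i (x k ω)‖) := ae_all_iff.2 fun i => hb i k
  have part1 : ∀ᵐ ω ∂μ,
      (μ[fun ω' => ‖lamg k ω' - lam k ω'‖ | 𝒢 k]) ω ≤ α k * (β * LS) := by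
    filter_upwards [hcond, hsmul, hsum, hballs] with ω h1 h2 h3 hball
    have h2' : (μ[β • ∑ i, d i | 𝒢 k]) ω = β * (μ[∑ i, d i | 𝒢 k]) ω := by
      rw [h2]; simp
    have h3' : (μ[∑ i, d i | 𝒢 k]) ω = ∑ i, (μ[d i | 𝒢 k]) ω := by
      rw [h3]; simp
    have hterm : ∀ i, (μ[d i | 𝒢 k]) ω ≤ α k * (C i + MF * B) := by
      intro i
      refine (hball i).trans ?_
      have : Chat i * ‖gf i (x k ω)‖ ≤ MF * B :=
        mul_le_mul (hChatle i) (hgfx_bd i ω) (norm_nonneg _) hMFpos.le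
      nlinarith [(hαpos k).le]
    calc (μ[fun ω' => ‖lamg k ω' - lam k ω'‖ | 𝒢 k]) ω
        ≤ (μ[β • ∑ i, d i | 𝒢 k]) ω := h1
      _ = β * ∑ i, (μ[d i | 𝒢 k]) ω := by rw [h2', h3']
      _ ≤ β * ∑ i, α k * (C i + MF * B) :=
          mul_le_mul_of_nonneg_left (Finset.sum_le_sum fun i _ => hterm i) hβ.le
      _ = α k * (β * LS) := by
          rw [← Finset.mul_sum, Finset.sum_add_distrib, Finset.sum_const,
            Finset.card_univ, Fintype.card_fin, nsmul_eq_mul, hLS, hM1]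
          ring
  refine ⟨part1, ?_⟩
  -- part 2
  rcases Nat.eq_zero_or_pos n with hn | hn
  · subst hn
    have hss : ∀ a b : EuclideanSpace ℝ (Fin 0), a = b := fun a b =>
      WithLp.ofLp_injective 2 (funext fun i => i.elim0)
    have hF : (fun ω' => ‖(∑ i, lamg k ω' i • gf i (x k ω')) -
        ∑ i, lam k ω' i • gf i (x k ω')‖) = fun _ : Ω => (0 : ℝ) := by
      funext ω
      rw [hss (∑ i, lamg k ω i • gf i (x k ω)) (∑ i, lam k ω i • gf i (x k ω)),
        sub_self, norm_zero]
    rw [hF]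
    have hMS0 : MS = 0 := by rw [hMS]; norm_num
    rw [show (fun _ : Ω => (0 : ℝ)) = (0 : Ω → ℝ) from rfl, condExp_zero, hMS0]
    filter_upwards with ω
    simp
  · set MS' : ℝ := Real.sqrt m * B with hMS'def
    have hMS'nn : 0 ≤ MS' := mul_nonneg (Real.sqrt_nonneg _) hBnn
    have hMS'le : MS' ≤ MS := by
      rw [hMS]
      refine mul_le_mul_of_nonneg_right ?_ hBnn
      refine Real.sqrt_le_sqrt ?_
      have : (1 : ℝ) ≤ (n : ℝ) := by exact_mod_cast hn
      nlinarith [Nat.cast_nonneg (α := ℝ) m]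
    set F : Ω → ℝ := fun ω => ‖(∑ i, lamg k ω i • gf i (x k ω)) -
        ∑ i, lam k ω i • gf i (x k ω)‖ with hFdef
    have hproj1 : ∀ i : Fin m, Measurable fun ω => lamg k ω i := fun i =>
      (EuclideanSpace.proj i : EuclideanSpace ℝ (Fin m) →L[ℝ] ℝ).continuous.measurable.comp
        (hlamg_meas k)
    have hproj2 : ∀ i : Fin m, Measurable fun ω => lam k ω i := fun i =>
      (EuclideanSpace.proj i : EuclideanSpace ℝ (Fin m) →L[ℝ] ℝ).continuous.measurable.comp
        hlam_sm.measurable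
    have hF_sm : StronglyMeasurable F := by
      apply StronglyMeasurable.norm
      apply StronglyMeasurable.sub
      · exact Finset.stronglyMeasurable_fun_sum _ fun i _ =>
          ((hproj1 i).stronglyMeasurable).smul (hgfx_sm i)
      · exact Finset.stronglyMeasurable_fun_sum _ fun i _ =>
          ((hproj2 i).stronglyMeasurable).smul (hgfx_sm i)
    have hFbd : ∀ ω, F ω ≤ 2 * B := by
      intro ω
      calc F ω ≤ ‖∑ i, lamg k ω i • gf i (x k ω)‖ +
            ‖∑ i, lam k ω i • gf i (x k ω)‖ := norm_sub_le _ _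
        _ ≤ B + B := add_le_add
            (aux_simplex_comb_norm_le _ (hlamg k ω).1 _ B fun i => hgfx_bd i ω)
            (aux_simplex_comb_norm_le _ (hlam k ω).1 _ B fun i => hgfx_bd i ω)
        _ = 2 * B := by ring
    have hFint : Integrable F μ := by
      refine Integrable.mono' (integrable_const (2 * B))
        hF_sm.aestronglyMeasurable (Filter.Eventually.of_forall fun ω => ?_)
      rw [Real.norm_eq_abs, abs_of_nonneg (norm_nonneg _)]
      exact hFbd ω
    have hpt2 : F ≤ᵐ[μ] (MS' • fun ω => ‖lamg k ω - lam k ω‖) := by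
      refine Filter.Eventually.of_forall fun ω => ?_
      simp only [Pi.smul_apply, smul_eq_mul]
      have h0 : (∑ i, lamg k ω i • gf i (x k ω)) - ∑ i, lam k ω i • gf i (x k ω)
          = ∑ i, (lamg k ω i - lam k ω i) • gf i (x k ω) := by
        rw [← Finset.sum_sub_distrib]
        refine Finset.sum_congr rfl fun i _ => ?_
        rw [sub_smul]
      have heq : F ω = ‖∑ i, (lamg k ω i - lam k ω i) • gf i (x k ω)‖ := by
        rw [hFdef]
        exact congrArg norm h0
      calc F ω = ‖∑ i, (lamg k ω i - lam k ω i) • gf i (x k ω)‖ := heq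
        _ ≤ ∑ i, ‖(lamg k ω i - lam k ω i) • gf i (x k ω)‖ := norm_sum_le _ _
        _ = ∑ i, |lamg k ω i - lam k ω i| * ‖gf i (x k ω)‖ := by
            refine Finset.sum_congr rfl fun i _ => ?_
            rw [norm_smul, Real.norm_eq_abs]
        _ ≤ ∑ i, |lamg k ω i - lam k ω i| * B := Finset.sum_le_sum fun i _ =>
            mul_le_mul_of_nonneg_left (hgfx_bd i ω) (abs_nonneg _)
        _ = (∑ i, |(lamg k ω - lam k ω) i|) * B := by
            rw [Finset.sum_mul]
            exact Finset.sum_congr rfl fun i _ => by rw [PiLp.sub_apply]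
        _ ≤ Real.sqrt m * ‖lamg k ω - lam k ω‖ * B :=
            mul_le_mul_of_nonneg_right (aux_sum_abs_le _) hBnn
        _ = MS' * ‖lamg k ω - lam k ω‖ := by rw [hMS'def]; ring
    have hRHSint : Integrable (MS' • fun ω => ‖lamg k ω - lam k ω‖) μ :=
      hfint.smul MS'
    have hcond2 := condExp_mono (m := 𝒢 k) hFint hRHSint hpt2
    have hsmul2 := condExp_smul (μ := μ) (m := 𝒢 k) MS'
      (fun ω => ‖lamg k ω - lam k ω‖)
    filter_upwards [hcond2, hsmul2, part1] with ω h1 h2 hp1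
    have h2' : (μ[MS' • fun ω => ‖lamg k ω - lam k ω‖ | 𝒢 k]) ω
        = MS' * (μ[fun ω' => ‖lamg k ω' - lam k ω'‖ | 𝒢 k]) ω := by
      rw [h2]; simp
    have hαβLS : 0 ≤ α k * (β * LS) := by
      have hM1nn : 0 ≤ M1 := hM1 ▸ Finset.sum_nonneg fun i _ => (hC i).le
      have hLSnn : 0 ≤ LS := by
        rw [hLS]
        exact add_nonneg hM1nn
          (mul_nonneg (mul_nonneg (Nat.cast_nonneg m) hMFpos.le) hBnn)
      exact mul_nonneg (hαpos k).le (mul_nonneg hβ.le hLSnn)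
    calc (μ[F | 𝒢 k]) ω ≤ (μ[MS' • fun ω => ‖lamg k ω - lam k ω‖ | 𝒢 k]) ω := h1
      _ = MS' * (μ[fun ω' => ‖lamg k ω' - lam k ω'‖ | 𝒢 k]) ω := h2'
      _ ≤ MS' * (α k * (β * LS)) := mul_le_mul_of_nonneg_left hp1 hMS'nn
      _ ≤ MS * (α k * (β * LS)) := mul_le_mul_of_nonneg_right hMS'le hαβLS
      _ = α k * (β * LS * MS) := by ring
end

section
/- Let c > 0, M > 0, k ≥ 1, let a_1, …, a_{k+1} be nonnegative reals, and let b_1, …, b_k be reals satisfying b_s ≤ (c(s−1)/4) a_s − (c(s+1)/4) a_{s+1} + M/(c(s+1)) for each s = 1, …, k. Then Σ_{s=1}^k s · b_s ≤ kM/c, and consequently (Σ_{s=1}^k s · b_s) / (Σ_{s=1}^k s) ≤ 2M/(c(k+1)). -/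
open scoped BigOperators

lemma stmt15_sum_id (k : ℕ) : (∑ s ∈ Finset.Icc 1 k, (s : ℝ)) = (k : ℝ) * ((k : ℝ) + 1) / 2 := by
  induction k with
  | zero => simp
  | succ n ih =>
    rw [Finset.sum_Icc_succ_top (by omega)]
    push_cast
    rw [ih]; ring

lemma stmt15_key (c M : ℝ) (hc : 0 < c) (hM : 0 < M) :
    ∀ k, 1 ≤ k → ∀ (a b : ℕ → ℝ), (∀ s ∈ Finset.Icc 1 (k + 1), 0 ≤ a s) →
    (∀ s ∈ Finset.Icc 1 k,
      b s ≤ c * ((s : ℝ) - 1) / 4 * a s - c * ((s : ℝ) + 1) / 4 * a (s + 1) +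
        M / (c * ((s : ℝ) + 1))) →
    (∑ s ∈ Finset.Icc 1 k, (s : ℝ) * b s) ≤
      (k : ℝ) * M / c - c * (k : ℝ) * ((k : ℝ) + 1) / 4 * a (k + 1) := by
  intro k hk
  induction k, hk using Nat.le_induction with
  | base =>
    intro a b ha hb
    have h1 := hb 1 (by simp)
    simp only [Finset.Icc_self, Finset.sum_singleton]
    push_cast at h1 ⊢
    have heq : M / (c * (1 + 1 : ℝ)) = M / c * (1 / 2) := by
      rw [div_mul_div_comm, mul_one]; norm_num
    rw [heq] at h1
    have hMc : (0 : ℝ) ≤ M / c := by positivity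
    norm_num at h1 ⊢
    linarith
  | succ n hn ih =>
    intro a b ha hb
    have hsub : (∑ s ∈ Finset.Icc 1 n, (s : ℝ) * b s) ≤
        (n : ℝ) * M / c - c * (n : ℝ) * ((n : ℝ) + 1) / 4 * a (n + 1) := by
      apply ih a b
      · intro s hs; exact ha s (Finset.mem_Icc.mpr ⟨(Finset.mem_Icc.mp hs).1, by
          have := (Finset.mem_Icc.mp hs).2; omega⟩)
      · intro s hs; exact hb s (Finset.mem_Icc.mpr ⟨(Finset.mem_Icc.mp hs).1, by
          have := (Finset.mem_Icc.mp hs).2; omega⟩)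
    rw [Finset.sum_Icc_succ_top (by omega)]
    have hlast := hb (n + 1) (Finset.mem_Icc.mpr ⟨by omega, le_refl _⟩)
    push_cast at hlast hsub ⊢
    have heq : M / (c * ((n : ℝ) + 1 + 1)) = M / c * (1 / ((n : ℝ) + 1 + 1)) := by
      rw [div_mul_div_comm, mul_one]
    rw [heq] at hlast
    have hfrac2 : ((n : ℝ) + 1) * (M / c * (1 / ((n : ℝ) + 1 + 1))) ≤ M / c := by
      have h1 : ((n : ℝ) + 1) * (1 / ((n : ℝ) + 1 + 1)) ≤ 1 := by
        rw [mul_one_div, div_le_one (by positivity)]; linarith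
      have h2 : (0 : ℝ) ≤ M / c := by positivity
      calc ((n : ℝ) + 1) * (M / c * (1 / ((n : ℝ) + 1 + 1)))
          = M / c * (((n : ℝ) + 1) * (1 / ((n : ℝ) + 1 + 1))) := by ring
        _ ≤ M / c * 1 := mul_le_mul_of_nonneg_left h1 h2
        _ = M / c := by ring
    have hmul := mul_le_mul_of_nonneg_left hlast (show (0:ℝ) ≤ (n:ℝ) + 1 by positivity)
    have hkey : ((n : ℝ) + 1) * M / c = (n : ℝ) * M / c + M / c := by ring
    linarith
/-- Deterministic telescoping lemma behind the `O(1/k)` rate in the strongly convex case: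
if `b_s ≤ (c(s−1)/4)a_s − (c(s+1)/4)a_{s+1} + M/(c(s+1))` for `s = 1,…,k` with `a` nonnegative,
then `Σ_{s=1}^k s·b_s ≤ kM/c` and `(Σ_{s=1}^k s·b_s)/(Σ_{s=1}^k s) ≤ 2M/(c(k+1))`. -/
theorem stmt15 (c M : ℝ) (hc : 0 < c) (hM : 0 < M) (k : ℕ) (hk : 1 ≤ k)
    (a : ℕ → ℝ) (ha : ∀ s ∈ Finset.Icc 1 (k + 1), 0 ≤ a s)
    (b : ℕ → ℝ)
    (hb : ∀ s ∈ Finset.Icc 1 k,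
      b s ≤ c * ((s : ℝ) - 1) / 4 * a s - c * ((s : ℝ) + 1) / 4 * a (s + 1) +
        M / (c * ((s : ℝ) + 1))) :
    (∑ s ∈ Finset.Icc 1 k, (s : ℝ) * b s) ≤ (k : ℝ) * M / c ∧
    (∑ s ∈ Finset.Icc 1 k, (s : ℝ) * b s) / (∑ s ∈ Finset.Icc 1 k, (s : ℝ)) ≤
      2 * M / (c * ((k : ℝ) + 1)) := by
  have key := stmt15_key c M hc hM k hk a b ha hb
  have hak : 0 ≤ a (k + 1) := ha (k + 1) (Finset.mem_Icc.mpr ⟨by omega, le_refl _⟩)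
  have hk1 : (1:ℝ) ≤ (k:ℝ) := by exact_mod_cast hk
  have hterm : 0 ≤ c * (k:ℝ) * ((k:ℝ) + 1) / 4 * a (k + 1) := by
    apply mul_nonneg _ hak
    positivity
  have h1 : (∑ s ∈ Finset.Icc 1 k, (s : ℝ) * b s) ≤ (k : ℝ) * M / c := by
    linarith
  refine ⟨h1, ?_⟩
  rw [stmt15_sum_id, div_le_div_iff₀ (by nlinarith) (by positivity)]
  calc (∑ s ∈ Finset.Icc 1 k, (s : ℝ) * b s) * (c * ((k:ℝ) + 1))
      ≤ (k:ℝ) * M / c * (c * ((k:ℝ) + 1)) :=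
        mul_le_mul_of_nonneg_right h1 (by positivity)
    _ = 2 * M * ((k:ℝ) * ((k:ℝ) + 1) / 2) := by field_simp
end

section
/- Let ᾱ > 0, Θ ≥ 0, M̂ > 0, and k ≥ 1. Let a_1, …, a_{k+1} be reals with 0 ≤ a_s ≤ Θ² for all s, set α_s = ᾱ/√s, and let b_1, …, b_k be reals satisfying 2 α_s b_s ≤ a_s − a_{s+1} + α_s² M̂ for each s = 1, …, k. Then (1/k) Σ_{s=1}^k b_s ≤ Θ²/(2ᾱ√k) + ᾱ M̂ / √k. -/
open scoped BigOperators

lemma sumsqrt_le (k : ℕ) : ∑ s ∈ Finset.Icc 1 k, 1 / Real.sqrt s ≤ 2 * Real.sqrt k := by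
  induction k with
  | zero => simp
  | succ n ih =>
    rw [Finset.sum_Icc_succ_top (by omega)]
    have h1 : Real.sqrt n ≥ 0 := Real.sqrt_nonneg _
    have h2 : (0:ℝ) < Real.sqrt (n+1) := Real.sqrt_pos.mpr (by positivity)
    have hsq1 : Real.sqrt n ^ 2 = (n:ℝ) := Real.sq_sqrt (by positivity)
    have hsq2 : Real.sqrt (n+1) ^ 2 = (n:ℝ)+1 := Real.sq_sqrt (by positivity)
    have key : 1 / Real.sqrt ((n:ℕ)+1 : ℕ) ≤ 2 * Real.sqrt ((n:ℕ)+1:ℕ) - 2 * Real.sqrt n := by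
      push_cast
      rw [div_le_iff₀ h2]
      nlinarith [sq_nonneg (Real.sqrt (n+1) - Real.sqrt n), sq_nonneg (Real.sqrt (n+1) * Real.sqrt n)]
    have : (2:ℝ) * Real.sqrt n ≤ 2 * Real.sqrt n := le_refl _
    push_cast at key ⊢
    linarith [ih]

/-- Deterministic telescoping lemma behind the `O(1/√k)` rate in the convex case:
with `α_s = ᾱ/√s`, if `0 ≤ a_s ≤ Θ²` and `2α_s b_s ≤ a_s − a_{s+1} + α_s² M̂` for
`s = 1,…,k`, then `(1/k) Σ_{s=1}^k b_s ≤ Θ²/(2ᾱ√k) + ᾱM̂/√k`. -/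
theorem stmt17 (abar Θ Mhat : ℝ) (habar : 0 < abar) (hΘ : 0 ≤ Θ) (hMhat : 0 < Mhat)
    (k : ℕ) (hk : 1 ≤ k)
    (a : ℕ → ℝ) (ha : ∀ s ∈ Finset.Icc 1 (k + 1), 0 ≤ a s ∧ a s ≤ Θ ^ 2)
    (b : ℕ → ℝ)
    (hb : ∀ s ∈ Finset.Icc 1 k,
      2 * (abar / Real.sqrt s) * b s ≤ a s - a (s + 1) + (abar / Real.sqrt s) ^ 2 * Mhat) :
    (1 / (k : ℝ)) * ∑ s ∈ Finset.Icc 1 k, b s ≤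
      Θ ^ 2 / (2 * abar * Real.sqrt k) + abar * Mhat / Real.sqrt k := by
  have key : ∀ n : ℕ, n ≤ k →
      ∑ s ∈ Finset.Icc 1 n, b s + Real.sqrt n * a (n+1) / (2 * abar) ≤
        Θ^2 * Real.sqrt n / (2 * abar) +
          (abar * Mhat / 2) * ∑ s ∈ Finset.Icc 1 n, 1 / Real.sqrt s := by
    intro n
    induction n with
    | zero => intro _; simp
    | succ n ih =>
      intro hn
      have ihh := ih (by omega)
      rw [Finset.sum_Icc_succ_top (by omega), Finset.sum_Icc_succ_top (by omega)]
      have r_pos : (0:ℝ) < Real.sqrt ((n:ℝ)+1) := Real.sqrt_pos.mpr (by positivity)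
      have rsq : Real.sqrt ((n:ℝ)+1) ^ 2 = (n:ℝ)+1 := Real.sq_sqrt (by positivity)
      have hmono : Real.sqrt (n:ℝ) ≤ Real.sqrt ((n:ℝ)+1) := Real.sqrt_le_sqrt (by linarith)
      have hbn := hb (n+1) (by simp; omega)
      have han1 := ha (n+1) (by simp; omega)
      have han2 := ha (n+2) (by simp; omega)
      push_cast at hbn ihh ⊢
      -- bound on b (n+1)
      have hbb : b (n+1) ≤ Real.sqrt ((n:ℝ)+1) * (a (n+1) - a (n+2)) / (2*abar)
          + abar * Mhat / (2 * Real.sqrt ((n:ℝ)+1)) := by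
        have h2 : 2 * (abar / Real.sqrt ((n:ℝ)+1)) * b (n+1)
            ≤ a (n+1) - a (n+2) + (abar / Real.sqrt ((n:ℝ)+1))^2 * Mhat := by
          convert hbn using 4 <;> push_cast <;> ring
        have h3 := mul_le_mul_of_nonneg_left h2
          (le_of_lt (show (0:ℝ) < Real.sqrt ((n:ℝ)+1)/(2*abar) by positivity))
        have e1 : Real.sqrt ((n:ℝ)+1)/(2*abar) * (2 * (abar / Real.sqrt ((n:ℝ)+1)) * b (n+1))
            = b (n+1) := by field_simp
        have e2 : Real.sqrt ((n:ℝ)+1)/(2*abar) *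
              (a (n+1) - a (n+2) + (abar / Real.sqrt ((n:ℝ)+1))^2 * Mhat)
            = Real.sqrt ((n:ℝ)+1) * (a (n+1) - a (n+2)) / (2*abar)
              + abar * Mhat / (2 * Real.sqrt ((n:ℝ)+1)) := by
          rw [div_pow, rsq]
          field_simp
          linear_combination (abar^2*Mhat) * rsq
        rw [e1, e2] at h3
        exact h3
      have hdrop : (Real.sqrt ((n:ℝ)+1) - Real.sqrt (n:ℝ)) * a (n+1)
          ≤ (Real.sqrt ((n:ℝ)+1) - Real.sqrt (n:ℝ)) * Θ^2 :=
        mul_le_mul_of_nonneg_left han1.2 (by linarith)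
      have h2a : (0:ℝ) < 2 * abar := by linarith
      have hrle : abar * Mhat / (2 * Real.sqrt ((n:ℝ)+1)) = (abar * Mhat / 2) * (1 / Real.sqrt ((n:ℝ)+1)) := by
        field_simp
      have eaa : a (n+1+1) = a (n+2) := rfl
      rw [eaa]
      have expand : Real.sqrt ((n:ℝ)+1) * (a (n+1) - a (n+2)) / (2*abar)
          = Real.sqrt ((n:ℝ)+1) * a (n+1) / (2*abar) - Real.sqrt ((n:ℝ)+1) * a (n+2) / (2*abar) := by
        ring
      have step : ∑ s ∈ Finset.Icc 1 n, b s + b (n+1)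
            + Real.sqrt ((n:ℝ)+1) * a (n+2) / (2*abar)
          ≤ ∑ s ∈ Finset.Icc 1 n, b s + Real.sqrt ((n:ℝ)+1) * a (n+1) / (2*abar)
            + (abar * Mhat / 2) * (1 / Real.sqrt ((n:ℝ)+1)) := by
        rw [← hrle]; linarith [hbb]
      have split : Real.sqrt ((n:ℝ)+1) * a (n+1) / (2*abar)
          = Real.sqrt (n:ℝ) * a (n+1) / (2*abar)
            + (Real.sqrt ((n:ℝ)+1) - Real.sqrt (n:ℝ)) * a (n+1) / (2*abar) := by ring
      have hdrop2 : (Real.sqrt ((n:ℝ)+1) - Real.sqrt (n:ℝ)) * a (n+1) / (2*abar)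
          ≤ (Real.sqrt ((n:ℝ)+1) - Real.sqrt (n:ℝ)) * Θ^2 / (2*abar) :=
        div_le_div_of_nonneg_right hdrop (le_of_lt h2a) |>.trans_eq rfl
      calc ∑ s ∈ Finset.Icc 1 n, b s + b (n+1) + Real.sqrt ((n:ℝ)+1) * a (n+2) / (2*abar)
          ≤ ∑ s ∈ Finset.Icc 1 n, b s + Real.sqrt ((n:ℝ)+1) * a (n+1) / (2*abar)
            + (abar * Mhat / 2) * (1 / Real.sqrt ((n:ℝ)+1)) := step
        _ ≤ Θ^2 * Real.sqrt ((n:ℝ)+1) / (2*abar)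
            + (abar * Mhat / 2) * (∑ s ∈ Finset.Icc 1 n, 1 / Real.sqrt (s:ℝ) + 1 / Real.sqrt ((n:ℝ)+1)) := by
            rw [split]
            have := ihh
            have idd : Θ^2 * Real.sqrt ((n:ℝ)+1) / (2*abar)
                = Θ^2 * Real.sqrt (n:ℝ) / (2*abar)
                  + (Real.sqrt ((n:ℝ)+1) - Real.sqrt (n:ℝ)) * Θ^2 / (2*abar) := by ring
            linarith [hdrop2, this, idd]
  have hkey := key k (le_refl k)
  have hsq : Real.sqrt (k:ℝ) > 0 := Real.sqrt_pos.mpr (by positivity)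
  have hak1 := (ha (k+1) (by simp)).1
  have hsum := sumsqrt_le k
  have hkk : Real.sqrt (k:ℝ) * Real.sqrt (k:ℝ) = (k:ℝ) :=
    Real.mul_self_sqrt (by positivity)
  have hb_total : ∑ s ∈ Finset.Icc 1 k, b s
      ≤ Θ^2 * Real.sqrt k / (2 * abar) + abar * Mhat * Real.sqrt k := by
    have h1 : Real.sqrt (k:ℝ) * a (k+1) / (2 * abar) ≥ 0 := by positivity
    nlinarith [hkey, hsum, mul_le_mul_of_nonneg_left hsum (le_of_lt (by positivity : (0:ℝ) < abar * Mhat / 2))]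
  have hkpos : (0:ℝ) < k := by exact_mod_cast hk
  have goal_eq : (Θ ^ 2 / (2 * abar * Real.sqrt k) + abar * Mhat / Real.sqrt k) * k
      = Θ^2 * Real.sqrt k / (2 * abar) + abar * Mhat * Real.sqrt k := by
    field_simp
    linear_combination (-1:ℝ) * hkk
  calc (1 / (k : ℝ)) * ∑ s ∈ Finset.Icc 1 k, b s
      ≤ (1 / (k : ℝ)) * (Θ^2 * Real.sqrt k / (2 * abar) + abar * Mhat * Real.sqrt k) := by
        apply mul_le_mul_of_nonneg_left hb_total (by positivity)
    _ = Θ ^ 2 / (2 * abar * Real.sqrt k) + abar * Mhat / Real.sqrt k := by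
        rw [← goal_eq]
        field_simp
end
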